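/- arXiv:2306.15785 — 6 statements merged into one kernel-verified Lean document; each statement's English description precedes it below -/
import Mathlib

section
/- For any permutation π in the symmetric group S_n, the number of up-down runs of π equals the length of the longest alternating subsequence of π. (An up-down run of π is either a maximal monotone consecutive subsequence (birun) of π, or the single entry π(1) if π(1)>π(2).) -/
open Finset

section Defs
variable {α : Type*} [LinearOrder α]

/-- Number of descents of a list. -/
def descentsCount : List α → ℕ
  | a :: b :: l => (if b < a then 1 else 0) + descentsCount (b :: l)
  | _ => 0

/-- Number of (interior) peaks of a list. -/
def peaksCount : List α → ℕ
  | a :: b :: c :: l => (if a < b ∧ c < b then 1 else 0) + peaksCount (b :: c :: l)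
  | _ => 0

/-- 1 if the list starts with a descent, else 0. -/
def initDesc : List α → ℕ
  | a :: b :: _ => if b < a then 1 else 0
  | _ => 0

/-- Number of left peaks of a list. -/
def leftPeaksCount (l : List α) : ℕ := initDesc l + peaksCount l

/-- Number of interior direction changes. -/
def turnsCount : List α → ℕ
  | a :: b :: c :: l => (if (a < b ∧ c < b) ∨ (b < a ∧ b < c) then 1 else 0) + turnsCount (b :: c :: l)
  | _ => 0

/-- Number of biruns (maximal monotone consecutive subsequences). -/
def birunsCount (l : List α) : ℕ := if l = [] then 0 else turnsCount l + 1

/-- Number of up-down runs. -/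
def udrCount (l : List α) : ℕ := initDesc l + birunsCount l

/-- `IsAltFrom true l` : the list `l` alternates starting with a descent. -/
def IsAltFrom : Bool → List α → Prop
  | _, [] => True
  | _, [_] => True
  | true, a :: b :: l => b < a ∧ IsAltFrom false (b :: l)
  | false, a :: b :: l => a < b ∧ IsAltFrom true (b :: l)

end Defs

def desP {n : ℕ} (π : Equiv.Perm (Fin n)) : ℕ := descentsCount (List.ofFn ⇑π)
def pkP {n : ℕ} (π : Equiv.Perm (Fin n)) : ℕ := peaksCount (List.ofFn ⇑π)
def lpkP {n : ℕ} (π : Equiv.Perm (Fin n)) : ℕ := leftPeaksCount (List.ofFn ⇑π)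
def brP {n : ℕ} (π : Equiv.Perm (Fin n)) : ℕ := birunsCount (List.ofFn ⇑π)
def udrP {n : ℕ} (π : Equiv.Perm (Fin n)) : ℕ := udrCount (List.ofFn ⇑π)
def AltP {n : ℕ} (π : Equiv.Perm (Fin n)) : Prop := IsAltFrom true (List.ofFn ⇑π)

def fixedCount {n : ℕ} (π : Equiv.Perm (Fin n)) : ℕ :=
  (Finset.univ.filter fun x => π x = x).card
def cycleCount {n : ℕ} (π : Equiv.Perm (Fin n)) : ℕ := π.cycleType.card + fixedCount π
def oddCycleCount {n : ℕ} (π : Equiv.Perm (Fin n)) : ℕ :=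
  (π.cycleType.filter fun l => l % 2 = 1).card + fixedCount π

noncomputable def stirC (n k : ℕ) : ℕ := Nat.card {π : Equiv.Perm (Fin n) // cycleCount π = k}
noncomputable def dOdd (n k : ℕ) : ℕ :=
  Nat.card {π : Equiv.Perm (Fin n) // cycleCount π = k ∧ ∀ l ∈ π.cycleType, l % 2 = 1}
noncomputable def eOdd (n k : ℕ) : ℕ := Nat.card {π : Equiv.Perm (Fin n) // oddCycleCount π = k}
noncomputable def fOdd (n k m : ℕ) : ℕ :=
  Nat.card {π : Equiv.Perm (Fin n) // oddCycleCount π = k ∧ cycleCount π = m}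

noncomputable def eulerE (k : ℕ) : ℕ := Nat.card {π : Equiv.Perm (Fin k) // AltP π}

/-!
Write `maxAltLength d l` for the length of a longest sublist of `l` that alternates starting with
a descent (`d = true`) or an ascent (`d = false`). If `l = a :: b :: r` starts with a step in
direction `d`, then `maxAltLength d l = maxAltLength (!d) (b :: r) + 1`: put `a` in front of a
longest `!d`-alternating sublist of `b :: r`, after replacing its first entry by `b` if that entry
is not beyond `a` in direction `d`. A `!d`-alternating sublist starting with `a` may start with `b`
instead, so `maxAltLength (!d) l = maxAltLength (!d) (b :: r)`. Hence, once adjacent entries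
differ, `maxAltLength true l` counts the initial descent, the turns, and one more, as `udrCount`.
-/

section AlternatingSublists

variable {α : Type*} [LinearOrder α]

def AltStep : Bool → α → α → Prop
  | true, a, b => b < a
  | false, a, b => a < b

instance (d : Bool) (a b : α) : Decidable (AltStep d a b) := by
  cases d <;> unfold AltStep <;> infer_instance

lemma altStep_not_iff {d : Bool} {a b : α} : AltStep (!d) a b ↔ AltStep d b a := by
  cases d <;> rfl

lemma AltStep.trans {d : Bool} {a b c : α} (hab : AltStep d a b) (hbc : AltStep d b c) :
    AltStep d a c := by
  cases d
  · exact lt_trans hab hbc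
  · exact lt_trans hbc hab

lemma AltStep.not_altStep_not {d : Bool} {a b : α} (h : AltStep d a b) : ¬AltStep (!d) a b := by
  cases d
  · exact not_lt_of_gt h
  · exact not_lt_of_gt h

lemma AltStep.of_not_altStep {d : Bool} {a b c : α} (hac : AltStep d a c)
    (hab : ¬AltStep d a b) : AltStep d b c := by
  cases d
  · exact lt_of_le_of_lt (not_lt.mp hab) hac
  · exact lt_of_lt_of_le hac (not_lt.mp hab)

lemma exists_altStep_of_ne {a b : α} (h : a ≠ b) : ∃ d, AltStep d a b :=
  h.lt_or_gt.elim (fun h => ⟨false, h⟩) (fun h => ⟨true, h⟩)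

lemma isAltFrom_cons_cons {d : Bool} {a b : α} {l : List α} :
    IsAltFrom d (a :: b :: l) ↔ AltStep d a b ∧ IsAltFrom (!d) (b :: l) := by
  cases d <;> rfl

lemma isAltFrom_of_length_le_one {d : Bool} {l : List α} (h : l.length ≤ 1) : IsAltFrom d l := by
  match d, l with
  | _, [] | _, [_] => trivial

lemma IsAltFrom.tail {d : Bool} {a : α} {l : List α} (h : IsAltFrom d (a :: l)) :
    IsAltFrom (!d) l := by
  cases l with
  | nil => exact isAltFrom_of_length_le_one (Nat.zero_le 1)
  | cons b l => exact (isAltFrom_cons_cons.mp h).2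

lemma IsAltFrom.replace_head {d : Bool} {a c : α} {l : List α} (h : IsAltFrom (!d) (a :: l))
    (hac : AltStep d a c) : IsAltFrom (!d) (c :: l) := by
  cases l with
  | nil => exact isAltFrom_of_length_le_one le_rfl
  | cons b l =>
    obtain ⟨hab, hl⟩ := isAltFrom_cons_cons.mp h
    have hcb : AltStep d b c := AltStep.trans (altStep_not_iff.mp hab) hac
    exact isAltFrom_cons_cons.mpr ⟨altStep_not_iff.mpr hcb, hl⟩

def altLengths (d : Bool) (l : List α) : Set ℕ :=
  {k | ∃ s : List α, s.Sublist l ∧ IsAltFrom d s ∧ s.length = k}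

noncomputable def maxAltLength (d : Bool) (l : List α) : ℕ :=
  sSup (altLengths d l)

lemma bddAbove_altLengths (d : Bool) (l : List α) : BddAbove (altLengths d l) :=
  ⟨l.length, by rintro _ ⟨s, hs, -, rfl⟩; exact hs.length_le⟩

lemma length_le_maxAltLength {d : Bool} {s l : List α} (hs : s.Sublist l) (h : IsAltFrom d s) :
    s.length ≤ maxAltLength d l :=
  le_csSup (bddAbove_altLengths d l) ⟨s, hs, h, rfl⟩

lemma maxAltLength_mem_altLengths (d : Bool) (l : List α) :
    maxAltLength d l ∈ altLengths d l :=
  Nat.sSup_mem ⟨0, [], List.nil_sublist l, isAltFrom_of_length_le_one (Nat.zero_le 1), rfl⟩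
    (bddAbove_altLengths d l)

lemma maxAltLength_le {d : Bool} {l : List α} {m : ℕ}
    (h : ∀ s : List α, s.Sublist l → IsAltFrom d s → s.length ≤ m) : maxAltLength d l ≤ m := by
  obtain ⟨s, hs, halt, hlen⟩ := maxAltLength_mem_altLengths d l
  exact hlen ▸ h s hs halt

lemma maxAltLength_nil (d : Bool) : maxAltLength d ([] : List α) = 0 :=
  Nat.le_zero.mp <| maxAltLength_le fun _ hs _ => hs.length_le

lemma one_le_maxAltLength (d : Bool) (a : α) (l : List α) : 1 ≤ maxAltLength d (a :: l) :=
  length_le_maxAltLength ((List.nil_sublist l).cons_cons a) (isAltFrom_of_length_le_one le_rfl)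

lemma maxAltLength_singleton (d : Bool) (a : α) : maxAltLength d [a] = 1 :=
  le_antisymm (maxAltLength_le fun _ hs _ => hs.length_le) (one_le_maxAltLength d a [])

lemma maxAltLength_cons_le (d : Bool) (a : α) (l : List α) :
    maxAltLength d (a :: l) ≤ maxAltLength (!d) l + 1 := by
  refine maxAltLength_le fun s hs h => ?_
  rcases List.sublist_cons_iff.mp hs with hs | ⟨t, rfl, ht⟩
  · cases s with
    | nil => exact Nat.zero_le _
    | cons x t =>
      exact Nat.succ_le_succ <| length_le_maxAltLength ((t.sublist_cons_self x).trans hs) h.tail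
  · exact Nat.succ_le_succ <| length_le_maxAltLength ht h.tail

lemma maxAltLength_cons_cons_of_altStep {d : Bool} {a b : α} {r : List α} (hab : AltStep d a b) :
    maxAltLength d (a :: b :: r) = maxAltLength (!d) (b :: r) + 1 := by
  refine le_antisymm (maxAltLength_cons_le d a _) ?_
  obtain ⟨s, hs, h, hlen⟩ := maxAltLength_mem_altLengths (!d) (b :: r)
  rw [← hlen]
  rcases List.sublist_cons_iff.mp hs with hs | ⟨t, rfl, ht⟩
  · cases s with
    | nil => exact one_le_maxAltLength d a _
    | cons x t =>
      by_cases hax : AltStep d a x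
      · exact length_le_maxAltLength ((hs.cons b).cons_cons a)
          (isAltFrom_cons_cons.mpr ⟨hax, h⟩)
      · have hbt : IsAltFrom (!d) (b :: t) := h.replace_head (AltStep.of_not_altStep hab hax)
        have htr : t.Sublist r := (t.sublist_cons_self x).trans hs
        exact length_le_maxAltLength ((htr.cons_cons b).cons_cons a)
          (isAltFrom_cons_cons.mpr ⟨hab, hbt⟩)
  · exact length_le_maxAltLength ((ht.cons_cons b).cons_cons a)
      (isAltFrom_cons_cons.mpr ⟨hab, h⟩)

lemma maxAltLength_not_cons_cons_of_altStep {d : Bool} {a b : α} {r : List α}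
    (hab : AltStep d a b) : maxAltLength (!d) (a :: b :: r) = maxAltLength (!d) (b :: r) := by
  refine le_antisymm (maxAltLength_le fun s hs h => ?_) ?_
  · rcases List.sublist_cons_iff.mp hs with hs | ⟨t, rfl, ht⟩
    · exact length_le_maxAltLength hs h
    · rcases List.sublist_cons_iff.mp ht with ht | ⟨t, rfl, -⟩
      · cases t with
        | nil => exact one_le_maxAltLength _ b r
        | cons x t =>
          show (b :: x :: t).length ≤ _
          exact length_le_maxAltLength (ht.cons_cons b) (h.replace_head hab)
      · exact absurd (isAltFrom_cons_cons.mp h).1 (AltStep.not_altStep_not hab)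
  · obtain ⟨s, hs, h, hlen⟩ := maxAltLength_mem_altLengths (!d) (b :: r)
    exact hlen ▸ length_le_maxAltLength (hs.cons a) h

def initStep (d : Bool) : List α → ℕ
  | a :: b :: _ => if AltStep d a b then 1 else 0
  | _ => 0

lemma initStep_true (l : List α) : initStep true l = initDesc l := by
  match l with
  | [] | [_] => rfl
  | _ :: _ :: _ => rfl

lemma turnsCount_cons_cons_of_altStep {d : Bool} {a b : α} {r : List α} (h : AltStep d a b) :
    turnsCount (a :: b :: r) = initStep (!d) (b :: r) + turnsCount (b :: r) := by
  cases r with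
  | nil => rfl
  | cons c r =>
    cases d <;>
      simp only [AltStep] at h <;>
      simp [turnsCount, initStep, AltStep, h, not_lt_of_gt h]

lemma maxAltLength_cons_of_isChain {a : α} {l : List α} (hl : (a :: l).IsChain (· ≠ ·))
    (d : Bool) : maxAltLength d (a :: l) = initStep d (a :: l) + turnsCount (a :: l) + 1 := by
  induction l generalizing a d with
  | nil => simp [maxAltLength_singleton, initStep, turnsCount]
  | cons b r ih =>
    obtain ⟨hab, hl⟩ := List.isChain_cons_cons.mp hl
    obtain ⟨e, he⟩ := exists_altStep_of_ne hab
    rw [turnsCount_cons_cons_of_altStep he]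
    obtain rfl | rfl := Bool.eq_or_eq_not d e
    · rw [maxAltLength_cons_cons_of_altStep he, ih hl]
      simp only [initStep, if_pos he]
      omega
    · rw [maxAltLength_not_cons_cons_of_altStep he, ih hl]
      simp [initStep, AltStep.not_altStep_not he]

lemma udrCount_eq_maxAltLength {l : List α} (hl : l.IsChain (· ≠ ·)) :
    udrCount l = maxAltLength true l := by
  cases l with
  | nil => simp [udrCount, birunsCount, initDesc, maxAltLength_nil]
  | cons a l =>
    rw [maxAltLength_cons_of_isChain hl, initStep_true, udrCount, birunsCount,
      if_neg (List.cons_ne_nil a l)]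
    omega

end AlternatingSublists

/-- the number of up-down runs of a permutation equals the length of its
longest alternating subsequence. -/
theorem udr_eq_longest_alternating_subsequence (n : ℕ) (π : Equiv.Perm (Fin n)) :
    udrP π = sSup {k : ℕ | ∃ l : List (Fin n),
      l.Sublist (List.ofFn ⇑π) ∧ IsAltFrom true l ∧ l.length = k} :=
  udrCount_eq_maxAltLength (List.nodup_ofFn.mpr π.injective).isChain
end

section
/- For all n ≥ 1 and k ≥ 0, the number of permutations π ∈ S_n with pk(π) = k and pk(π⁻¹) = 0 equals the binomial coefficient C(n, 2k+1). -/
open Finset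

/-!
Put `σ = π⁻¹`. A permutation without peaks is V-shaped: it decreases down to `0` and then
increases. So `σ` lists a set `B ∋ 0` of values (its left branch) in decreasing order, followed by
the remaining values in increasing order; equivalently, `σ` sorts `Fin n` by the key `x ↦ -x` on
`B`, `x ↦ x` off `B`, and `B ↦ σ` is a bijection onto the peak-free permutations. In `π = σ⁻¹`
the position `v` is a peak exactly when `v ∉ B` and `v + 1 ∈ B`, so `pk π` counts the up-steps of
the indicator word of `B`. Finally, sending `B` to the set of positions where its indicator word
changes (a `0` appended at position `n`) is a bijection from the sets containing `0` with `k`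
up-steps onto the `(2k+1)`-subsets of `{0, …, n-1}`: membership of `i` is recovered as the parity
of the number of changes at positions `≥ i`.
-/

section Peaks

variable {α : Type*} [LinearOrder α]

theorem peaksCount_ofFn (g : ℕ → α) : ∀ n : ℕ,
    peaksCount (List.ofFn fun i : Fin n => g i) =
      #{i ∈ range (n - 2) | g i < g (i + 1) ∧ g (i + 2) < g (i + 1)}
  | 0 | 1 | 2 => by simp [peaksCount]
  | n + 3 => by
    have ih := peaksCount_ofFn (fun i => g (i + 1)) (n + 2)
    simp only [List.ofFn_succ, Fin.val_succ, Fin.val_zero] at ih ⊢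
    rw [peaksCount, ih, card_filter, card_filter, show n + 3 - 2 = n + 1 by omega,
      sum_range_succ', add_comm]
    simp [add_assoc]

theorem exists_peak_of_lt_of_gt {g : ℕ → α} {p q r : ℕ}
    (hg : Set.InjOn g (Set.Icc p r)) (hpq : p < q) (hqr : q < r) (hp : g p < g q)
    (hr : g r < g q) : ∃ i, p ≤ i ∧ i + 2 ≤ r ∧ g i < g (i + 1) ∧ g (i + 2) < g (i + 1) := by
  obtain ⟨m, hm, hmax⟩ := (Icc p r).exists_max_image g ⟨q, mem_Icc.2 ⟨hpq.le, hqr.le⟩⟩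
  have hqm := hmax q (mem_Icc.2 ⟨hpq.le, hqr.le⟩)
  rw [mem_Icc] at hm
  have hpm : p ≠ m := by rintro rfl; exact (hp.trans_le hqm).false
  have hmr : m ≠ r := by rintro rfl; exact (hr.trans_le hqm).false
  obtain ⟨i, rfl⟩ : ∃ i, m = i + 1 := ⟨m - 1, by omega⟩
  have hmem : ∀ j, p ≤ j → j ≤ r → j ∈ Icc p r := fun j h1 h2 => mem_Icc.2 ⟨h1, h2⟩
  have hne : ∀ j, p ≤ j → j ≤ r → j ≠ i + 1 → g j ≠ g (i + 1) := fun j h1 h2 hj h =>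
    hj (hg ⟨h1, h2⟩ ⟨hm.1, hm.2⟩ h)
  exact ⟨i, by omega, by omega,
    (hmax i (hmem i (by omega) (by omega))).lt_of_ne (hne i (by omega) (by omega) (by omega)),
    (hmax (i + 2) (hmem _ (by omega) (by omega))).lt_of_ne
      (hne (i + 2) (by omega) (by omega) (by omega))⟩

end Peaks

namespace Finset

def upSteps (n : ℕ) (B : Finset ℕ) : Finset ℕ := {i ∈ range n | i ∉ B ∧ i + 1 ∈ B}

def boundary (n : ℕ) (B : Finset ℕ) : Finset ℕ := {i ∈ range n | ¬(i ∈ B ↔ i + 1 ∈ B)}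

def suffixParity (n : ℕ) (T : Finset ℕ) : Finset ℕ := {i ∈ range n | Odd #{j ∈ T | i ≤ j}}

theorem card_filter_le_eq_add (T : Finset ℕ) (i : ℕ) :
    #{j ∈ T | i ≤ j} = #{j ∈ T | i + 1 ≤ j} + if i ∈ T then 1 else 0 := by
  rw [card_filter, card_filter, ← sum_ite_eq' T i (fun _ => 1), ← sum_add_distrib]
  exact sum_congr rfl fun j _ => by split_ifs <;> omega

variable {n : ℕ} {B T : Finset ℕ}

theorem boundary_subset : boundary n B ⊆ range n := filter_subset _ _

theorem suffixParity_subset : suffixParity n T ⊆ range n := filter_subset _ _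

theorem mem_boundary (hB : B ⊆ range n) {i : ℕ} :
    i ∈ boundary n B ↔ ¬(i ∈ B ↔ i + 1 ∈ B) := by
  refine mem_filter.trans (and_iff_right_of_imp fun h => ?_)
  rw [mem_range]
  by_contra hi
  exact h (iff_of_false (fun h' => hi (mem_range.1 (hB h')))
    fun h' => hi (by have := mem_range.1 (hB h'); omega))

theorem mem_suffixParity (hT : T ⊆ range n) {i : ℕ} :
    i ∈ suffixParity n T ↔ Odd #{j ∈ T | i ≤ j} := by
  refine mem_filter.trans (and_iff_right_of_imp fun h => ?_)
  obtain ⟨j, hj⟩ := card_pos.1 h.pos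
  rw [mem_filter] at hj
  exact mem_range.2 ((mem_range.1 (hT hj.1)).trans_le' hj.2)

theorem boundary_suffixParity (hT : T ⊆ range n) : boundary n (suffixParity n T) = T := by
  ext i
  rw [mem_boundary suffixParity_subset, mem_suffixParity hT, mem_suffixParity hT,
    card_filter_le_eq_add T i]
  by_cases hi : i ∈ T <;> simp [hi, Nat.odd_iff]; omega

theorem odd_card_boundary_iff (hB : B ⊆ range n) (i : ℕ) :
    Odd #{j ∈ boundary n B | i ≤ j} ↔ i ∈ B := by
  induction h : n - i generalizing i with
  | zero =>
    have hiB : i ∉ B := fun h' => by have := mem_range.1 (hB h'); omega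
    have : {j ∈ boundary n B | i ≤ j} = ∅ :=
      filter_false_of_mem fun j hj => by have := mem_range.1 (boundary_subset hj); omega
    simp [this, hiB]
  | succ d ih =>
    have ih' : Odd #{j ∈ boundary n B | i < j} ↔ i + 1 ∈ B := ih (i + 1) (by omega)
    rw [card_filter_le_eq_add]
    simp only [mem_boundary hB]
    by_cases hi : i ∈ B <;> by_cases hi' : i + 1 ∈ B <;> simp [hi, hi', Nat.odd_add_one, ih']

theorem suffixParity_boundary (hB : B ⊆ range n) : suffixParity n (boundary n B) = B := by
  ext i
  rw [mem_suffixParity boundary_subset, odd_card_boundary_iff hB]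

theorem card_boundary (hB : B ⊆ range n) (h0 : 0 ∈ B) :
    #(boundary n B) = 2 * #(upSteps n B) + 1 := by
  set D := {i ∈ range n | i ∈ B ∧ i + 1 ∉ B}
  have hsplit : boundary n B = D ∪ upSteps n B := by
    rw [boundary, upSteps, ← filter_or]
    exact filter_congr fun _ _ => by tauto
  have hdisj : Disjoint D (upSteps n B) :=
    disjoint_filter.2 fun _ _ h h' => h'.1 h.1
  have htele : (#D : ℤ) - #(upSteps n B) = 1 := by
    have hnB : n ∉ B := fun h => by simpa using hB h
    rw [upSteps, natCast_card_filter, natCast_card_filter, ← sum_sub_distrib]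
    calc ∑ i ∈ range n, ((if i ∈ B ∧ i + 1 ∉ B then 1 else 0) -
            (if i ∉ B ∧ i + 1 ∈ B then 1 else 0) : ℤ)
        = ∑ i ∈ range n, ((if i ∈ B then 1 else 0) - (if i + 1 ∈ B then 1 else 0) : ℤ) := by
          refine sum_congr rfl fun i _ => ?_
          by_cases h : i ∈ B <;> by_cases h' : i + 1 ∈ B <;> simp [h, h']
      _ = 1 := by rw [sum_range_sub' (fun i => if i ∈ B then (1 : ℤ) else 0)]; simp [h0, hnB]
  rw [hsplit, card_union_of_disjoint hdisj]
  omega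

theorem card_upSteps_eq (h0 : 0 ∈ B) (hB : B ⊆ range n) :
    #(upSteps n B) = #{i ∈ range (n - 2) | i + 1 ∉ B ∧ i + 2 ∈ B} := by
  refine card_nbij' (· - 1) (· + 1) (fun i hi => ?_) (fun i hi => ?_) (fun i hi => ?_)
    (fun i _ => Nat.add_sub_cancel i 1)
  all_goals simp only [upSteps, mem_coe, mem_filter, mem_range] at hi ⊢
  · have hi0 : i ≠ 0 := by rintro rfl; exact hi.2.1 h0
    have hin : i + 1 < n := mem_range.1 (hB hi.2.2)
    rw [Nat.sub_add_cancel (by omega), show i - 1 + 2 = i + 1 by omega]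
    exact ⟨by omega, hi.2⟩
  · exact ⟨by omega, hi.2⟩
  · have hi0 : i ≠ 0 := by rintro rfl; exact hi.2.1 h0
    omega

theorem card_filter_upSteps_eq_choose (k : ℕ) :
    #{B ∈ (range n).powerset | 0 ∈ B ∧ #(upSteps n B) = k} = n.choose (2 * k + 1) := by
  rw [← card_range n, ← card_powersetCard, card_range]
  refine card_nbij' (boundary n) (suffixParity n) (fun B hB => ?_) (fun T hT => ?_)
    (fun B hB => ?_) (fun T hT => ?_)
  · simp only [mem_coe, mem_filter, mem_powerset] at hB
    simp only [mem_coe, mem_powersetCard]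
    exact ⟨boundary_subset, by rw [card_boundary hB.1 hB.2.1, hB.2.2]⟩
  · simp only [mem_coe, mem_powersetCard] at hT
    have h0 : 0 ∈ suffixParity n T := by
      rw [mem_suffixParity hT.1, filter_true_of_mem fun j _ => j.zero_le, hT.2]
      exact odd_two_mul_add_one k
    have hcard := card_boundary suffixParity_subset h0
    rw [boundary_suffixParity hT.1, hT.2] at hcard
    simp only [mem_coe, mem_filter, mem_powerset]
    exact ⟨suffixParity_subset, h0, by omega⟩
  · simp only [mem_coe, mem_filter, mem_powerset] at hB
    exact suffixParity_boundary hB.1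
  · simp only [mem_coe, mem_powersetCard] at hT
    exact boundary_suffixParity hT.1

end Finset

section SignedKey

variable {n : ℕ} {B : Finset ℕ}

def signedKey (B : Finset ℕ) (x : Fin n) : ℤ := if (x : ℕ) ∈ B then -(x : ℤ) else x

theorem signedKey_injective (B : Finset ℕ) : Function.Injective (signedKey (n := n) B) := by
  intro x y h
  simp only [signedKey] at h
  ext
  split_ifs at h <;> omega

theorem signedKey_lt_signedKey_iff {x y : Fin n} (h : x < y) :
    signedKey B x < signedKey B y ↔ (y : ℕ) ∉ B := by
  have h' : (x : ℕ) < y := h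
  simp only [signedKey]
  split_ifs <;> simp_all <;> omega

theorem signedKey_le_signedKey_zero_iff [NeZero n] (h0 : 0 ∈ B) (x : Fin n) :
    signedKey B x ≤ signedKey B (0 : Fin n) ↔ (x : ℕ) ∈ B := by
  simp only [signedKey, Fin.val_zero n, h0, if_true]
  split_ifs with hx <;> simp only [hx, iff_false, neg_nonpos, Int.natCast_nonneg,
    CharP.cast_eq_zero, neg_zero, Nat.cast_nonpos, Fin.val_eq_zero_iff]
  rintro rfl
  exact hx (by simpa using h0)

end SignedKey

namespace Tuple

variable {n : ℕ} {α : Type*} [LinearOrder α] {f : Fin n → α}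

theorem eq_sort_of_strictMono {σ : Equiv.Perm (Fin n)} (h : StrictMono (f ∘ σ)) : σ = sort f :=
  eq_sort_iff.2 ⟨h.monotone, fun _ _ hij hf => absurd hf (h hij).ne⟩

theorem strictMono_comp_sort (hf : Function.Injective f) : StrictMono (f ∘ sort f) :=
  (monotone_sort f).strictMono_of_injective (hf.comp (sort f).injective)

end Tuple

open Fin.NatCast in
theorem Fin.natCast_lt_natCast_of_lt {n : ℕ} [NeZero n] {a b : ℕ} (hab : a < b) (hb : b < n) :
    (a : Fin n) < b := by
  rw [Fin.lt_def, Fin.val_cast_of_lt (hab.trans hb), Fin.val_cast_of_lt hb]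
  exact hab

namespace Equiv.Perm

open Fin.NatCast

variable {n : ℕ} [NeZero n] (σ : Perm (Fin n))

theorem pkP_eq_card :
    pkP σ = #((range (n - 2)).filter fun i : ℕ => σ i < σ ↑(i + 1) ∧ σ ↑(i + 2) < σ ↑(i + 1)) := by
  rw [pkP, ← peaksCount_ofFn (fun i : ℕ => σ i)]
  simp only [Fin.cast_val_eq_self]

theorem not_peak_of_pkP_eq_zero (hσ : pkP σ = 0) {p q r : Fin n} (hpq : p < q) (hqr : q < r) :
    ¬(σ p < σ q ∧ σ r < σ q) := by
  rintro ⟨hp, hr⟩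
  have hinj : Set.InjOn (fun i : ℕ => σ i) (Set.Icc p r) := fun a ha b hb h => by
    have hab := congrArg Fin.val (σ.injective h)
    have := r.isLt
    rwa [Fin.val_cast_of_lt (by simp at ha; omega), Fin.val_cast_of_lt (by simp at hb; omega)]
      at hab
  obtain ⟨i, -, hir, hpeak⟩ := exists_peak_of_lt_of_gt (g := fun i : ℕ => σ i) hinj hpq hqr
    (by simpa using hp) (by simpa using hr)
  rw [pkP_eq_card, card_eq_zero, filter_eq_empty_iff] at hσ
  exact hσ (mem_range.2 (by omega)) hpeak

def leftBranch : Finset ℕ := (univ.filter fun v : Fin n => σ⁻¹ v ≤ σ⁻¹ 0).map Fin.valEmbedding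

variable {σ}

theorem mem_leftBranch {v : Fin n} : (v : ℕ) ∈ leftBranch σ ↔ σ⁻¹ v ≤ σ⁻¹ 0 := by
  simp [leftBranch, Fin.val_inj]

theorem leftBranch_subset : leftBranch σ ⊆ range n := by
  intro v hv
  obtain ⟨v, -, rfl⟩ := mem_map.1 hv
  exact mem_range.2 v.isLt

theorem zero_mem_leftBranch : 0 ∈ leftBranch σ := by
  simpa using (mem_leftBranch (σ := σ) (v := 0)).2 le_rfl

theorem strictMono_signedKey_leftBranch (hσ : pkP σ = 0) :
    StrictMono (signedKey (leftBranch σ) ∘ σ) := by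
  intro i j hij
  simp only [Function.comp]
  rcases lt_trichotomy (σ i) (σ j) with hlt | heq | hgt
  · have hj : 0 < σ j := lt_of_le_of_lt (Fin.zero_le _) hlt
    rw [signedKey_lt_signedKey_iff hlt, mem_leftBranch, coe_inv, symm_apply_apply, not_le]
    refine lt_of_not_ge fun hj' =>
      not_peak_of_pkP_eq_zero σ hσ hij (hj'.lt_of_ne ?_) ⟨hlt, by simpa⟩
    rintro rfl
    simp at hj
  · exact absurd (σ.injective heq) hij.ne
  · have hi : 0 < σ i := lt_of_le_of_lt (Fin.zero_le _) hgt
    refine lt_of_not_ge fun h => ?_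
    have h' := h.lt_of_ne ((signedKey_injective _).ne (σ.injective.ne hij.ne'))
    rw [signedKey_lt_signedKey_iff hgt, mem_leftBranch, coe_inv, symm_apply_apply, not_le] at h'
    exact not_peak_of_pkP_eq_zero σ hσ h' hij ⟨by simpa, hgt⟩

theorem pkP_eq_zero_of_strictMono {B : Finset ℕ} (h : StrictMono (signedKey B ∘ σ)) :
    pkP σ = 0 := by
  rw [pkP_eq_card, card_eq_zero, filter_eq_empty_iff]
  rintro i hi ⟨h1, h2⟩
  rw [mem_range] at hi
  have h01 := h (Fin.natCast_lt_natCast_of_lt (a := i) (b := i + 1) (by omega) (by omega))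
  have h12 := h (Fin.natCast_lt_natCast_of_lt (a := i + 1) (b := i + 2) (by omega) (by omega))
  exact h12.asymm ((signedKey_lt_signedKey_iff h2).2 ((signedKey_lt_signedKey_iff h1).1 h01))

theorem pkP_inv_eq_card_upSteps {B : Finset ℕ} (h : StrictMono (signedKey B ∘ σ)) (h0 : 0 ∈ B)
    (hB : B ⊆ range n) : pkP σ⁻¹ = #(upSteps n B) := by
  have key_lt (x y : Fin n) : σ⁻¹ x < σ⁻¹ y ↔ signedKey B x < signedKey B y := by
    simpa using (h.lt_iff_lt (a := σ⁻¹ x) (b := σ⁻¹ y)).symm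
  rw [card_upSteps_eq h0 hB, pkP_eq_card]
  refine congrArg card (filter_congr fun i hi => ?_)
  rw [mem_range] at hi
  have h1 : (i : Fin n) < ↑(i + 1) := Fin.natCast_lt_natCast_of_lt (by omega) (by omega)
  have h2 : ((i + 1 : ℕ) : Fin n) < ↑(i + 2) := Fin.natCast_lt_natCast_of_lt (by omega) (by omega)
  rw [key_lt, key_lt, signedKey_lt_signedKey_iff h1, ← not_le,
    ((signedKey_injective B).ne h2.ne).le_iff_lt, signedKey_lt_signedKey_iff h2, not_not,
    Fin.val_cast_of_lt (by omega), Fin.val_cast_of_lt (by omega)]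

theorem leftBranch_sort {B : Finset ℕ} (h0 : 0 ∈ B) (hB : B ⊆ range n) :
    leftBranch (Tuple.sort (signedKey B : Fin n → ℤ)) = B := by
  have h := Tuple.strictMono_comp_sort (signedKey_injective (n := n) B)
  ext a
  by_cases ha : a < n
  · obtain ⟨v, rfl⟩ : ∃ v : Fin n, (v : ℕ) = a := ⟨⟨a, ha⟩, rfl⟩
    rw [mem_leftBranch, ← h.le_iff_le, ← signedKey_le_signedKey_zero_iff h0]
    simp
  · exact iff_of_false (fun h' => ha (mem_range.1 (leftBranch_subset h')))
      fun h' => ha (mem_range.1 (hB h'))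

end Equiv.Perm

open Equiv.Perm in
theorem card_pk_k_ipk_zero (n k : ℕ) (hn : 1 ≤ n) :
    Nat.card {π : Equiv.Perm (Fin n) // pkP π = k ∧ pkP π⁻¹ = 0}
      = Nat.choose n (2 * k + 1) := by
  have : NeZero n := ⟨by omega⟩
  rw [← card_filter_upSteps_eq_choose, Nat.card_eq_fintype_card, Fintype.card_subtype]
  refine card_nbij' (fun π => leftBranch π⁻¹) (fun B => (Tuple.sort (signedKey B))⁻¹)
    (fun π hπ => ?_) (fun B hB => ?_) (fun π hπ => ?_) (fun B hB => ?_) <;>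
    simp only [mem_coe, mem_filter, mem_univ, true_and, mem_powerset] at *
  · have hmono := strictMono_signedKey_leftBranch hπ.2
    refine ⟨leftBranch_subset, zero_mem_leftBranch, ?_⟩
    rw [← pkP_inv_eq_card_upSteps hmono zero_mem_leftBranch leftBranch_subset, inv_inv, hπ.1]
  · have hmono := Tuple.strictMono_comp_sort (signedKey_injective (n := n) B)
    rw [inv_inv, pkP_inv_eq_card_upSteps hmono hB.2.1 hB.1]
    exact ⟨hB.2.2, pkP_eq_zero_of_strictMono hmono⟩
  · rw [← Tuple.eq_sort_of_strictMono (strictMono_signedKey_leftBranch hπ.2), inv_inv]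
  · rw [inv_inv, leftBranch_sort hB.2.1 hB.1]
end

section
/- For all n ≥ 1 and k ≥ 0, the number of permutations π ∈ S_n with des(π) = k and pk(π⁻¹) = 0 equals the binomial coefficient C(n−1, k). -/
open Finset

section AuxSum
variable {α : Type*} [LinearOrder α]

lemma des_ofFn : ∀ (M : ℕ) (f : Fin (M + 1) → α),
    descentsCount (List.ofFn f) = ∑ i : Fin M, if f i.succ < f i.castSucc then 1 else 0
  | 0, f => by simp [descentsCount]
  | M + 1, f => by
    have h2 : List.ofFn (fun i : Fin (M+1) => f i.succ)
        = f 1 :: List.ofFn (fun i : Fin M => f i.succ.succ) := by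
      rw [List.ofFn_succ]; rfl
    rw [List.ofFn_succ, h2, descentsCount, ← h2, des_ofFn M, Fin.sum_univ_succ]
    congr 1

lemma pk_ofFn : ∀ (M : ℕ) (f : Fin (M + 2) → α),
    peaksCount (List.ofFn f) = ∑ i : Fin M,
      if f i.castSucc.castSucc < f i.castSucc.succ ∧ f i.succ.succ < f i.castSucc.succ then 1 else 0
  | 0, f => by simp [peaksCount]
  | M + 1, f => by
    have h2 : List.ofFn (fun i : Fin (M+2) => f i.succ)
        = f 1 :: List.ofFn (fun i : Fin (M+1) => f i.succ.succ) := by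
      rw [List.ofFn_succ]; rfl
    have h3 : List.ofFn (fun i : Fin (M+1) => f i.succ.succ)
        = f 2 :: List.ofFn (fun i : Fin M => f i.succ.succ.succ) := by
      rw [List.ofFn_succ]; rfl
    rw [List.ofFn_succ, h2, h3, peaksCount, ← h3, ← h2, pk_ofFn M, Fin.sum_univ_succ]
    congr 1

end AuxSum


namespace CDK2
open Finset

variable {N : ℕ}

lemma card_compl' (L : Finset (Fin N)) : Lᶜ.card = N - L.card := by
  simp [Finset.card_compl]

/-- increasing enumeration of `L`. -/
def eL (L : Finset (Fin N)) : Fin L.card ↪o Fin N := L.orderEmbOfFin rfl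

/-- increasing enumeration of `Lᶜ`. -/
def eC (L : Finset (Fin N)) : Fin (N - L.card) ↪o Fin N := Lᶜ.orderEmbOfFin (card_compl' L)

lemma eL_mem (L : Finset (Fin N)) (i : Fin L.card) : eL L i ∈ L :=
  Finset.orderEmbOfFin_mem _ _ _

lemma eC_not_mem (L : Finset (Fin N)) (i : Fin (N - L.card)) : eC L i ∉ L := by
  have := Finset.orderEmbOfFin_mem Lᶜ (card_compl' L) i
  rw [Finset.mem_compl] at this
  exact this

def bFun (L : Finset (Fin N)) (j : Fin N) : Fin N :=
  if h : (j : ℕ) < L.card then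
    eL L ⟨L.card - 1 - (j : ℕ), by omega⟩
  else
    eC L ⟨(j : ℕ) - L.card, by have := j.isLt; omega⟩

lemma bFun_mem_iff (L : Finset (Fin N)) (j : Fin N) : bFun L j ∈ L ↔ (j : ℕ) < L.card := by
  unfold bFun
  split
  · rename_i h
    simp only [h, iff_true]
    exact eL_mem L _
  · rename_i h
    simp only [h, iff_false]
    exact eC_not_mem L _

lemma bFun_inj (L : Finset (Fin N)) : Function.Injective (bFun L) := by
  intro a b hab
  by_cases ha : (a : ℕ) < L.card <;> by_cases hb : (b : ℕ) < L.card
  · rw [bFun, dif_pos ha, bFun, dif_pos hb] at hab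
    have := (eL L).injective hab
    simp only [Fin.mk.injEq] at this
    exact Fin.ext (by omega)
  · have h1 := (bFun_mem_iff L a).2 ha
    have h2 := (bFun_mem_iff L b).not.2 hb
    rw [hab] at h1; exact absurd h1 h2
  · have h1 := (bFun_mem_iff L b).2 hb
    have h2 := (bFun_mem_iff L a).not.2 ha
    rw [← hab] at h1; exact absurd h1 h2
  · rw [bFun, dif_neg ha, bFun, dif_neg hb] at hab
    have := (eC L).injective hab
    simp only [Fin.mk.injEq] at this
    exact Fin.ext (by omega)

noncomputable def bPerm (L : Finset (Fin N)) : Equiv.Perm (Fin N) :=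
  Equiv.ofBijective (bFun L) (Finite.injective_iff_bijective.mp (bFun_inj L))

lemma bPerm_apply (L : Finset (Fin N)) (j : Fin N) : bPerm L j = bFun L j := rfl

lemma bPerm_symm_lt_iff (L : Finset (Fin N)) (v : Fin N) :
    ((bPerm L).symm v : ℕ) < L.card ↔ v ∈ L := by
  have := bFun_mem_iff L ((bPerm L).symm v)
  rw [← bPerm_apply, Equiv.apply_symm_apply] at this
  exact this.symm

lemma bFun_not_peak (L : Finset (Fin N)) (i : ℕ) (h : i + 2 < N) :
    ¬(bFun L ⟨i, by omega⟩ < bFun L ⟨i + 1, by omega⟩ ∧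
      bFun L ⟨i + 2, h⟩ < bFun L ⟨i + 1, by omega⟩) := by
  by_cases hm : i + 1 < L.card
  · rintro ⟨h1, -⟩
    rw [bFun, dif_pos (show i < L.card by omega), bFun, dif_pos (show i + 1 < L.card from hm)] at h1
    have := (eL L).lt_iff_lt.mp h1
    simp only [Fin.mk_lt_mk] at this
    omega
  · rintro ⟨-, h2⟩
    rw [bFun, dif_neg (show ¬ i + 2 < L.card by omega), bFun, dif_neg hm] at h2
    have := (eC L).lt_iff_lt.mp h2
    simp only [Fin.mk_lt_mk] at this
    omega

lemma bPerm_desc_iff (L : Finset (Fin N)) {a b : Fin N} (hab : (a : ℕ) + 1 = (b : ℕ)) :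
    (bPerm L).symm b < (bPerm L).symm a ↔ b ∈ L := by
  have hab' : a < b := by rw [Fin.lt_def]; omega
  have key : ∀ v w : Fin N, v < w →
      (w ∈ L → (bPerm L).symm w < (bPerm L).symm v) ∧
      (w ∉ L → v ∉ L → (bPerm L).symm v < (bPerm L).symm w) := by
    intro v w hvw
    set x := (bPerm L).symm v with hx
    set y := (bPerm L).symm w with hy
    have hbv : bFun L x = v := by rw [← bPerm_apply, hx, Equiv.apply_symm_apply]
    have hbw : bFun L y = w := by rw [← bPerm_apply, hy, Equiv.apply_symm_apply]
    constructor
    · intro hw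
      have hyc : (y : ℕ) < L.card := (bPerm_symm_lt_iff L w).2 hw
      by_cases hv : v ∈ L
      · have hxc : (x : ℕ) < L.card := (bPerm_symm_lt_iff L v).2 hv
        rw [← hbv, ← hbw, bFun, dif_pos hxc, bFun, dif_pos hyc] at hvw
        have := (eL L).lt_iff_lt.mp hvw
        simp only [Fin.mk_lt_mk] at this
        rw [Fin.lt_def]; omega
      · have hxc : ¬((x : ℕ) < L.card) := fun hc => hv ((bPerm_symm_lt_iff L v).1 hc)
        rw [Fin.lt_def]; omega
    · intro hw hv
      have hyc : ¬((y : ℕ) < L.card) := fun hc => hw ((bPerm_symm_lt_iff L w).1 hc)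
      have hxc : ¬((x : ℕ) < L.card) := fun hc => hv ((bPerm_symm_lt_iff L v).1 hc)
      rw [← hbv, ← hbw, bFun, dif_neg hxc, bFun, dif_neg hyc] at hvw
      have := (eC L).lt_iff_lt.mp hvw
      simp only [Fin.mk_lt_mk] at this
      rw [Fin.lt_def]; omega
  by_cases hb : b ∈ L
  · simp only [hb, iff_true]
    exact (key a b hab').1 hb
  · simp only [hb, iff_false, not_lt]
    apply le_of_lt
    by_cases ha : a ∈ L
    · have h1 : ((bPerm L).symm a : ℕ) < L.card := (bPerm_symm_lt_iff L a).2 ha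
      have h2 : ¬(((bPerm L).symm b : ℕ) < L.card) := fun hc => hb ((bPerm_symm_lt_iff L b).1 hc)
      rw [Fin.lt_def]; omega
    · exact (key a b hab').2 hb ha

set_option maxHeartbeats 1000000 in
lemma valley_eq_bPerm {N : ℕ} (hN : 0 < N) (σ : Equiv.Perm (Fin N))
    (H : ∀ (i : ℕ) (h : i + 2 < N),
      ¬(σ ⟨i, by omega⟩ < σ ⟨i + 1, by omega⟩ ∧ σ ⟨i + 2, h⟩ < σ ⟨i + 1, by omega⟩)) :
    σ = bPerm (Finset.univ.filter fun v => ((σ.symm v : Fin N) : ℕ) < ((σ.symm ⟨0, hN⟩ : Fin N) : ℕ)) := by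
  generalize hmdef : ((σ.symm ⟨0, hN⟩ : Fin N) : ℕ) = m
  generalize hLdef : (Finset.univ.filter fun v : Fin N => ((σ.symm v : Fin N) : ℕ) < m) = L
  have hm : m < N := hmdef ▸ (σ.symm ⟨0, hN⟩).isLt
  have hσm : σ ⟨m, hm⟩ = ⟨0, hN⟩ := by
    have h0 : (⟨m, hm⟩ : Fin N) = σ.symm ⟨0, hN⟩ := Fin.ext (by simp [← hmdef])
    rw [h0, Equiv.apply_symm_apply]
  -- ascent propagation
  have prop : ∀ i j : ℕ, ∀ hij : i ≤ j, ∀ hj : j + 1 < N,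
      ∀ hasc : σ ⟨i, by omega⟩ < σ ⟨i + 1, by omega⟩, σ ⟨j, by omega⟩ < σ ⟨j + 1, hj⟩ := by
    intro i j
    induction j with
    | zero =>
      intro hij hj hasc
      obtain rfl : i = 0 := by omega
      exact hasc
    | succ j ih =>
      intro hij hj hasc
      rcases Nat.eq_or_lt_of_le hij with h | h
      · subst h; exact hasc
      · have hij' : i ≤ j := by omega
        have hj' : j + 1 < N := by omega
        have h1 : σ ⟨j, by omega⟩ < σ ⟨j + 1, hj'⟩ := ih hij' hj' hasc
        have h2 := H j hj
        have hne : σ ⟨j + 1, by omega⟩ ≠ σ ⟨j + 2, by omega⟩ := by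
          intro hc
          have := σ.injective hc
          simp only [Fin.mk.injEq] at this
          omega
        by_contra hc
        push_neg at hc
        exact h2 ⟨h1, lt_of_le_of_ne hc (Ne.symm hne)⟩
  -- descents before m
  have Dlem : ∀ i : ℕ, ∀ hi : i + 1 ≤ m, σ ⟨i + 1, by omega⟩ < σ ⟨i, by omega⟩ := by
    intro i hi
    have hne : σ ⟨i, by omega⟩ ≠ σ ⟨i + 1, by omega⟩ := by
      intro hc
      have := σ.injective hc
      simp only [Fin.mk.injEq] at this
      omega
    by_contra hc
    push_neg at hc
    have hasc : σ ⟨i, by omega⟩ < σ ⟨i + 1, by omega⟩ := lt_of_le_of_ne hc hne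
    have h1 : σ ⟨m - 1, by omega⟩ < σ ⟨m - 1 + 1, by omega⟩ :=
      prop i (m - 1) (by omega) (by omega) hasc
    clear hc
    have hmm : (⟨m - 1 + 1, by omega⟩ : Fin N) = ⟨m, hm⟩ := by
      simp only [Fin.mk.injEq]; omega
    have h2 : σ ⟨m - 1 + 1, by omega⟩ = ⟨0, hN⟩ := by rw [hmm, hσm]
    exact absurd (h1.trans_eq h2) (by simp [Fin.lt_def])
  -- ascents from m
  have Alem : ∀ i : ℕ, ∀ hmi : m ≤ i, ∀ hi : i + 1 < N, σ ⟨i, by omega⟩ < σ ⟨i + 1, hi⟩ := by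
    intro i hmi hi
    by_contra hc
    push_neg at hc
    have hnoasc : ¬ σ ⟨m, hm⟩ < σ ⟨m + 1, by omega⟩ := by
      intro hasc
      exact absurd (prop m i hmi hi hasc) (not_lt.mpr hc)
    have hne2 : σ ⟨m, hm⟩ ≠ σ ⟨m + 1, by omega⟩ := by
      intro h
      have := σ.injective h
      simp only [Fin.mk.injEq] at this
      omega
    have hdesc : σ ⟨m + 1, by omega⟩ < σ ⟨m, hm⟩ :=
      lt_of_le_of_ne (not_lt.mp hnoasc) (Ne.symm hne2)
    exact absurd (hdesc.trans_eq hσm) (by simp [Fin.lt_def])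
  -- strict antitone on [0, m]
  have SA : ∀ i j : ℕ, ∀ hij : i < j, ∀ hj : j ≤ m, σ ⟨j, by omega⟩ < σ ⟨i, by omega⟩ := by
    intro i j
    induction j with
    | zero => omega
    | succ j ih =>
      intro hij hj
      rcases Nat.eq_or_lt_of_le (Nat.succ_le_of_lt hij) with h | h
      · obtain rfl : i = j := by omega
        exact Dlem i hj
      · exact lt_trans (Dlem j hj) (ih (by omega) (by omega))
  -- strict monotone on [m, N)
  have SM : ∀ i j : ℕ, ∀ hmi : m ≤ i, ∀ hij : i < j, ∀ hj : j < N, σ ⟨i, by omega⟩ < σ ⟨j, hj⟩ := by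
    intro i j
    induction j with
    | zero => omega
    | succ j ih =>
      intro hmi hij hj
      rcases Nat.eq_or_lt_of_le (Nat.succ_le_of_lt hij) with h | h
      · obtain rfl : i = j := by omega
        exact Alem i hmi hj
      · exact lt_trans (ih hmi (by omega) (by omega)) (Alem j (by omega) hj)
  -- membership characterization of L
  have hmemL : ∀ v : Fin N, v ∈ L ↔ ((σ.symm v : Fin N) : ℕ) < m := by
    intro v; rw [← hLdef]; simp
  have happL : ∀ (j : ℕ) (hj : j < N), σ ⟨j, hj⟩ ∈ L ↔ j < m := by
    intro j hj
    rw [hmemL, Equiv.symm_apply_apply]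
  -- cardinality of L
  have hcard : L.card = m := by
    apply Finset.card_eq_of_bijective (fun i hi => σ ⟨i, by omega⟩)
    · intro v hv
      rw [hmemL] at hv
      refine ⟨((σ.symm v : Fin N) : ℕ), hv, ?_⟩
      rw [Fin.eta, Equiv.apply_symm_apply]
    · intro i hi
      exact (happL i (by omega)).2 hi
    · intro i j hi hj hij
      have := σ.injective hij
      simp only [Fin.mk.injEq] at this
      exact this
  -- pointwise equality
  ext j
  rw [bPerm_apply, bFun]
  split
  · rename_i hjc
    rw [hcard] at hjc
    have huniq : (fun r : Fin m => σ ⟨m - 1 - (r : ℕ), by omega⟩) = L.orderEmbOfFin hcard := by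
      apply Finset.orderEmbOfFin_unique
      · intro r
        exact (happL _ _).2 (by have := r.isLt; omega)
      · intro r s hrs
        have hrm := r.isLt
        have hsm := s.isLt
        rw [Fin.lt_def] at hrs
        exact SA (m - 1 - (s : ℕ)) (m - 1 - (r : ℕ)) (by omega) (by omega)
    have h1 : σ j = (fun r : Fin m => σ ⟨m - 1 - (r : ℕ), by omega⟩) ⟨m - 1 - (j : ℕ), by omega⟩ := by
      simp only
      congr 1
      rw [Fin.ext_iff]
      simp only
      omega
    rw [h1, huniq]
    exact congrArg Fin.val (Finset.orderEmbOfFin_eq_orderEmbOfFin_iff.mpr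
      (show m - 1 - (j : ℕ) = L.card - 1 - (j : ℕ) by omega))
  · rename_i hjc
    rw [hcard] at hjc
    push_neg at hjc
    have hjN := j.isLt
    have hcardC : Lᶜ.card = N - m := by rw [card_compl' L, hcard]
    have huniq : (fun r : Fin (N - m) => σ ⟨m + (r : ℕ), by have := r.isLt; omega⟩)
        = Lᶜ.orderEmbOfFin hcardC := by
      apply Finset.orderEmbOfFin_unique
      · intro r
        rw [Finset.mem_compl, happL]
        omega
      · intro r s hrs
        rw [Fin.lt_def] at hrs
        exact SM (m + (r : ℕ)) (m + (s : ℕ)) (by omega) (by omega) (by have := s.isLt; omega)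
    have h1 : σ j = (fun r : Fin (N - m) => σ ⟨m + (r : ℕ), by have := r.isLt; omega⟩)
        ⟨(j : ℕ) - m, by omega⟩ := by
      simp only
      congr 1
      rw [Fin.ext_iff]
      simp only
      omega
    rw [h1, huniq]
    exact congrArg Fin.val (Finset.orderEmbOfFin_eq_orderEmbOfFin_iff.mpr
      (show (j : ℕ) - m = (j : ℕ) - L.card by omega))

end CDK2

lemma pk_zero_iff {N : ℕ} (f : Fin N → Fin N) :
    peaksCount (List.ofFn f) = 0 ↔ ∀ (i : ℕ) (h : i + 2 < N),
      ¬(f ⟨i, by omega⟩ < f ⟨i + 1, by omega⟩ ∧ f ⟨i + 2, h⟩ < f ⟨i + 1, by omega⟩) := by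
  match N, f with
  | 0, f =>
    simp only [List.ofFn_zero, peaksCount, true_iff]
    intro i h; omega
  | 1, f =>
    simp only [List.ofFn_succ, List.ofFn_zero, peaksCount, true_iff]
    intro i h; omega
  | (M + 2), f =>
    rw [pk_ofFn M f, Finset.sum_eq_zero_iff]
    constructor
    · intro hall i h hcon
      have h2 := hall ⟨i, by omega⟩ (Finset.mem_univ _)
      rw [ite_eq_right_iff] at h2
      exact one_ne_zero (h2 hcon)
    · intro hns x _
      rw [ite_eq_right_iff]
      intro hc
      exact absurd hc (hns (x : ℕ) (by have := x.isLt; omega))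

lemma desP_filter {M : ℕ} (π : Equiv.Perm (Fin (M + 1))) :
    desP π = (Finset.univ.filter fun i : Fin M => π i.succ < π i.castSucc).card := by
  rw [desP, des_ofFn, Finset.card_filter]

lemma pkP_bPerm {N : ℕ} (L : Finset (Fin N)) : pkP (CDK2.bPerm L) = 0 := by
  rw [pkP, pk_zero_iff]
  intro i h
  exact CDK2.bFun_not_peak L i h

lemma desP_bPerm_inv {M : ℕ} (S : Finset (Fin M)) :
    desP (CDK2.bPerm (S.image Fin.succ))⁻¹ = S.card := by
  rw [desP_filter]
  congr 1
  ext i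
  simp only [Finset.mem_filter, Finset.mem_univ, true_and]
  have h1 : ∀ v, (CDK2.bPerm (S.image Fin.succ))⁻¹ v
      = (CDK2.bPerm (S.image Fin.succ)).symm v := fun _ => rfl
  rw [h1, h1, CDK2.bPerm_desc_iff _
    (by simp : ((i.castSucc : Fin (M + 1)) : ℕ) + 1 = ((i.succ : Fin (M + 1)) : ℕ))]
  simp [Finset.mem_image, Fin.succ_inj]

theorem card_des_k_ipk_zero_aux (n k : ℕ) (hn : 1 ≤ n) :
    Nat.card {π : Equiv.Perm (Fin n) // desP π = k ∧ pkP π⁻¹ = 0}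
      = Nat.choose (n - 1) k := by
  obtain ⟨M, rfl⟩ : ∃ M, n = M + 1 := ⟨n - 1, by omega⟩
  have hN : 0 < M + 1 := Nat.succ_pos M
  have hΦ : ∀ S : {S : Finset (Fin M) // S.card = k},
      desP (CDK2.bPerm (S.1.image Fin.succ))⁻¹ = k ∧
      pkP ((CDK2.bPerm (S.1.image Fin.succ))⁻¹)⁻¹ = 0 := by
    intro S
    refine ⟨by rw [desP_bPerm_inv, S.2], ?_⟩
    rw [inv_inv]
    exact pkP_bPerm _
  set Φ : {S : Finset (Fin M) // S.card = k} →
      {π : Equiv.Perm (Fin (M + 1)) // desP π = k ∧ pkP π⁻¹ = 0} :=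
    fun S => ⟨(CDK2.bPerm (S.1.image Fin.succ))⁻¹, hΦ S⟩ with hΦdef
  have hbij : Function.Bijective Φ := by
    constructor
    · rintro ⟨S, hS⟩ ⟨S', hS'⟩ hEq
      simp only [hΦdef, Subtype.mk.injEq, inv_inj] at hEq
      refine Subtype.ext (Finset.ext fun i => ?_)
      have d1 := CDK2.bPerm_desc_iff (S.image Fin.succ)
        (by simp : ((i.castSucc : Fin (M + 1)) : ℕ) + 1 = ((i.succ : Fin (M + 1)) : ℕ))
      have d2 := CDK2.bPerm_desc_iff (S'.image Fin.succ)
        (by simp : ((i.castSucc : Fin (M + 1)) : ℕ) + 1 = ((i.succ : Fin (M + 1)) : ℕ))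
      rw [hEq] at d1
      have := (d1.symm.trans d2 : i.succ ∈ S.image Fin.succ ↔ i.succ ∈ S'.image Fin.succ)
      simpa [Finset.mem_image, Fin.succ_inj] using this
    · rintro ⟨π, hdes, hpk⟩
      have H := (pk_zero_iff ⇑(π⁻¹)).mp hpk
      have hσ := CDK2.valley_eq_bPerm hN π⁻¹ H
      set L0 := (Finset.univ.filter fun v : Fin (M + 1) =>
        (((π⁻¹ : Equiv.Perm (Fin (M + 1))).symm v : Fin (M + 1)) : ℕ)
          < (((π⁻¹ : Equiv.Perm (Fin (M + 1))).symm ⟨0, hN⟩ : Fin (M + 1)) : ℕ)) with hL0def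
      have hπL : π = (CDK2.bPerm L0)⁻¹ := by
        have := congrArg Inv.inv hσ
        rwa [inv_inv] at this
      have h0 : (⟨0, hN⟩ : Fin (M + 1)) ∉ L0 := by simp [hL0def]
      set S := (Finset.univ.filter fun i : Fin M => i.succ ∈ L0) with hSdef
      have himg : S.image Fin.succ = L0 := by
        ext v
        simp only [Finset.mem_image, hSdef, Finset.mem_filter, Finset.mem_univ, true_and]
        constructor
        · rintro ⟨i, hi, rfl⟩; exact hi
        · intro hv
          have hvne : v ≠ 0 := by
            intro hc
            rw [hc, ← Fin.mk_zero] at hv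
            exact h0 hv
          exact ⟨v.pred hvne, by rwa [Fin.succ_pred], Fin.succ_pred _ _⟩
      have hScard : S.card = k := by
        have hfe : (Finset.univ.filter fun i : Fin M => π i.succ < π i.castSucc) = S := by
          ext i
          simp only [Finset.mem_filter, Finset.mem_univ, true_and, hSdef]
          rw [hπL]
          exact CDK2.bPerm_desc_iff L0
            (by simp : ((i.castSucc : Fin (M + 1)) : ℕ) + 1 = ((i.succ : Fin (M + 1)) : ℕ))
        rw [desP_filter, hfe] at hdes
        exact hdes
      refine ⟨⟨S, hScard⟩, ?_⟩
      apply Subtype.ext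
      show (CDK2.bPerm (S.image Fin.succ))⁻¹ = π
      rw [himg]
      exact hπL.symm
  rw [← Nat.card_eq_of_bijective Φ hbij, Nat.card_eq_fintype_card,
    Fintype.card_finset_len, Fintype.card_fin]
  simp

theorem card_des_k_ipk_zero (n k : ℕ) (hn : 1 ≤ n) :
    Nat.card {π : Equiv.Perm (Fin n) // desP π = k ∧ pkP π⁻¹ = 0}
      = Nat.choose (n - 1) k := by
  exact card_des_k_ipk_zero_aux n k hn
end

section
/- For all n ≥ 1 and k ≥ 0, the number of permutations π ∈ S_n with lpk(π) = k and pk(π⁻¹) = 0 equals the binomial coefficient C(n, 2k). -/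
open Finset

/-!
If `pk(π⁻¹) = 0`, then `σ = π⁻¹` is a valley permutation: it lists some set `A` of values in
decreasing order, followed by the complement of `A` in increasing order. For `v < w` the value `w`
precedes `v` in `σ` iff `w ∈ A`, so `π` has a descent at `i` iff `i + 1 ∈ A`; as whether `0 ∈ A`
does not matter, `π ↦ Des(π)` is a bijection onto the subsets of `[n - 1]`. The left peaks of `π`
are the starts of the maximal blocks of consecutive descents, and a word of length `n - 1` with `k`
maximal blocks of `1`s is determined by the `2k` block boundaries among its `n` gaps.
-/

open List

section Lists

variable {α : Type*} [LinearOrder α]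

def descentWord : List α → List Bool
  | a :: b :: l => decide (b < a) :: descentWord (b :: l)
  | _ => []

/-- `countTrueBlocks prev w` counts the maximal blocks of `true` in `prev :: w` that start
inside `w`. -/
def countTrueBlocks (prev : Bool) : List Bool → ℕ
  | [] => 0
  | b :: w => (b && !prev).toNat + countTrueBlocks b w

def descentIndicator {m : ℕ} (f : Fin (m + 1) → α) (i : Fin m) : Bool :=
  decide (f i.succ < f i.castSucc)

theorem descentWord_ofFn : ∀ {m : ℕ} (f : Fin (m + 1) → α),
    descentWord (ofFn f) = ofFn (descentIndicator f)
  | 0, _ => rfl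
  | m + 1, f => by
    rw [ofFn_succ, ofFn_succ (f := fun i => f i.succ), descentWord,
      ← ofFn_succ (f := fun i => f i.succ), descentWord_ofFn (fun i => f i.succ), ofFn_succ]
    rfl

theorem peaksCount_cons_cons : ∀ {a b : α} {l : List α}, (a :: b :: l).IsChain (· ≠ ·) →
    peaksCount (a :: b :: l) = countTrueBlocks (decide (b < a)) (descentWord (b :: l))
  | a, b, [], _ => rfl
  | a, b, c :: l, h => by
    rw [isChain_cons_cons] at h
    rw [peaksCount, descentWord, countTrueBlocks, peaksCount_cons_cons h.2]
    rcases h.1.lt_or_gt with hab | hab <;> simp [hab, not_lt_of_gt hab, Bool.toNat]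

theorem leftPeaksCount_eq_countTrueBlocks {l : List α} (hl : l.IsChain (· ≠ ·)) :
    leftPeaksCount l = countTrueBlocks false (descentWord l) := by
  match l, hl with
  | [], _ | [_], _ => rfl
  | a :: b :: l, hl =>
    rw [leftPeaksCount, peaksCount_cons_cons hl, initDesc, descentWord, countTrueBlocks]
    by_cases hba : b < a <;> simp [hba, Nat.add_comm]

theorem peaksCount_cons_cons_of_lt {a b : α} (hba : b < a) (l : List α) :
    peaksCount (a :: b :: l) = peaksCount (b :: l) := by
  cases l <;> simp [peaksCount, not_lt_of_gt hba]

theorem peaksCount_cons_eq_zero (a : α) : ∀ {l : List α}, l.IsChain (· < ·) →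
    peaksCount (a :: l) = 0
  | [], _ | [_], _ => rfl
  | b :: c :: l, h => by
    rw [isChain_cons_cons] at h
    simp [peaksCount, peaksCount_cons_eq_zero b h.2, not_lt_of_gt h.1]

theorem peaksCount_append_eq_zero : ∀ {l₁ l₂ : List α}, l₁.IsChain (· > ·) →
    l₂.IsChain (· < ·) → peaksCount (l₁ ++ l₂) = 0
  | [], [], _, _ => rfl
  | [], a :: _, _, h₂ => peaksCount_cons_eq_zero a (isChain_cons.1 h₂).2
  | [a], _, _, h₂ => peaksCount_cons_eq_zero a h₂
  | a :: b :: l₁, l₂, h₁, h₂ => by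
    rw [isChain_cons_cons] at h₁
    rw [cons_append, cons_append, peaksCount_cons_cons_of_lt h₁.1, ← cons_append]
    exact peaksCount_append_eq_zero h₁.2 h₂

theorem isChain_lt_of_peaksCount_eq_zero : ∀ {a b : α} {l : List α}, a < b →
    (a :: b :: l).IsChain (· ≠ ·) → peaksCount (a :: b :: l) = 0 →
    (a :: b :: l).IsChain (· < ·)
  | _, b, [], hab, _, _ => isChain_pair.2 hab
  | a, b, c :: l, hab, hne, hpk => by
    rw [isChain_cons_cons, isChain_cons_cons] at hne
    rw [peaksCount] at hpk
    have hbc : b < c := hne.2.1.lt_of_le (not_lt.1 fun hcb => by simp [hab, hcb] at hpk)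
    exact isChain_cons_cons.2 ⟨hab, isChain_lt_of_peaksCount_eq_zero hbc
      (isChain_cons_cons.2 hne.2) (by omega)⟩

theorem exists_append_of_peaksCount_eq_zero : ∀ {l : List α}, l.IsChain (· ≠ ·) →
    peaksCount l = 0 → ∃ l₁ l₂, l = l₁ ++ l₂ ∧ l₁.IsChain (· > ·) ∧ l₂.IsChain (· < ·)
  | [], _, _ => ⟨[], [], rfl, .nil, .nil⟩
  | [a], _, _ => ⟨[a], [], rfl, .singleton a, .nil⟩
  | a :: b :: l, hne, hpk => by
    rcases lt_or_gt_of_ne (isChain_cons_cons.1 hne).1 with hab | hba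
    · exact ⟨[], a :: b :: l, rfl, .nil, isChain_lt_of_peaksCount_eq_zero hab hne hpk⟩
    · rw [peaksCount_cons_cons_of_lt hba] at hpk
      obtain ⟨l₁, l₂, hl, h₁, h₂⟩ :=
        exists_append_of_peaksCount_eq_zero (isChain_cons_cons.1 hne).2 hpk
      refine ⟨a :: l₁, l₂, by rw [hl, cons_append], isChain_cons.2 ⟨fun y hy => ?_, h₁⟩, h₂⟩
      obtain rfl : y = b := by
        have := congrArg head? hl
        rw [head?_append, Option.mem_def.1 hy] at this
        simpa using this.symm
      exact hba

end Lists

theorem card_filter_fin_succ_eq_sum {β : Type*} [Fintype β] {m : ℕ}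
    (P : (Fin (m + 1) → β) → Prop) [DecidablePred P] :
    #{w | P w} = ∑ b : β, #{w : Fin m → β | P (Fin.cons b w)} := by
  simp only [card_filter]
  rw [← (Fin.consEquiv fun _ => β).sum_comp, Fintype.sum_prod_type]
  rfl

theorem card_countTrueBlocks_ofFn (m k : ℕ) (prev : Bool) :
    #{w : Fin m → Bool | countTrueBlocks prev (ofFn w) = k} =
      (m + 1).choose (2 * k + prev.toNat) := by
  induction m generalizing k prev with
  | zero =>
    rcases k with _ | k
    · cases prev <;> rfl
    · rw [Nat.choose_eq_zero_of_lt (by omega)]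
      simp [countTrueBlocks]
  | succ m ih =>
    rw [card_filter_fin_succ_eq_sum, Fintype.sum_bool]
    simp only [ofFn_succ, Fin.cons_zero, Fin.cons_succ, countTrueBlocks]
    cases prev
    · rcases k with _ | k
      · simp [ih]
      · have hshift (w : Fin m → Bool) :
            1 + countTrueBlocks true (ofFn w) = k + 1 ↔ countTrueBlocks true (ofFn w) = k := by
          omega
        simp only [Bool.true_and, Bool.not_false, Bool.toNat_true, Bool.false_and,
          Bool.toNat_false, zero_add, hshift, ih, add_zero]
        rw [show 2 * (k + 1) = 2 * k + 1 + 1 by ring, Nat.choose_succ_succ' (m + 1)]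
    · simp only [Bool.not_true, Bool.and_false, Bool.toNat_false, zero_add, ih,
        Bool.toNat_true, add_zero]
      rw [Nat.choose_succ_succ' (m + 1) (2 * k), add_comm]

theorem Equiv.Perm.eq_of_lt_iff_lt {α : Type*} [LinearOrder α] [Finite α] {σ τ : Equiv.Perm α}
    (h : ∀ v w, σ v < σ w ↔ τ v < τ w) : σ = τ := by
  have hmono : StrictMono (τ ∘ σ.symm) := fun x y hxy => by
    simpa using (h (σ.symm x) (σ.symm y)).1 (by simpa using hxy)
  ext x
  simpa using (congrFun hmono.eq_id (σ x)).symm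

section ValleyPerm

variable {n : ℕ}

def valleyList (A : Finset (Fin n)) : List (Fin n) := A.sort (· ≥ ·) ++ Aᶜ.sort

theorem nodup_valleyList (A : Finset (Fin n)) : (valleyList A).Nodup :=
  (sort_nodup _ _).append (sort_nodup _ _) <| by simp [List.Disjoint]

theorem mem_valleyList (A : Finset (Fin n)) (v : Fin n) : v ∈ valleyList A := by
  by_cases hv : v ∈ A <;> simp [valleyList, hv]

theorem length_valleyList (A : Finset (Fin n)) : (valleyList A).length = n := by
  simp [valleyList, card_add_card_compl]

def valleyPerm (A : Finset (Fin n)) : Equiv.Perm (Fin n) :=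
  (finCongr (length_valleyList A)).symm.trans
    ((nodup_valleyList A).getEquivOfForallMemList _ (mem_valleyList A))

theorem valleyPerm_apply (A : Finset (Fin n)) (p : Fin n) :
    valleyPerm A p = (valleyList A)[(p : ℕ)]'(by simp [length_valleyList]) := rfl

theorem ofFn_valleyPerm (A : Finset (Fin n)) : ofFn (valleyPerm A) = valleyList A :=
  ext_getElem (by simp [length_valleyList]) fun _ _ _ => by simp [valleyPerm_apply]

theorem peaksCount_ofFn_valleyPerm (A : Finset (Fin n)) :
    peaksCount (ofFn (valleyPerm A)) = 0 := by
  rw [ofFn_valleyPerm]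
  exact peaksCount_append_eq_zero (sortedGT_sort A).isChain (sortedLT_sort Aᶜ).isChain

theorem valleyPerm_apply_of_lt_card (A : Finset (Fin n)) {p : Fin n} (hp : (p : ℕ) < #A) :
    valleyPerm A p = (A.sort (· ≥ ·))[(p : ℕ)]'(by simpa using hp) := by
  simp only [valleyPerm_apply, valleyList]
  rw [getElem_append_left]

theorem valleyPerm_apply_of_card_le (A : Finset (Fin n)) {p : Fin n} (hp : #A ≤ p) :
    valleyPerm A p = Aᶜ.sort[(p : ℕ) - #A]'(by
      rw [length_sort, card_compl, Fintype.card_fin]; omega) := by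
  simp only [valleyPerm_apply, valleyList]
  rw [getElem_append_right (by simpa using hp)]
  simp

theorem valleyPerm_mem_iff (A : Finset (Fin n)) (p : Fin n) :
    valleyPerm A p ∈ A ↔ (p : ℕ) < #A := by
  by_cases hp : (p : ℕ) < #A
  · simp only [hp, iff_true, valleyPerm_apply_of_lt_card A hp]
    exact (mem_sort _).1 (getElem_mem _)
  · simp only [hp, iff_false, valleyPerm_apply_of_card_le A (not_lt.1 hp)]
    exact mem_compl.1 ((mem_sort _).1 (getElem_mem _))

theorem valleyPerm_lt_valleyPerm_of_lt_card (A : Finset (Fin n)) {p q : Fin n} (hpq : p < q)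
    (hq : (q : ℕ) < #A) : valleyPerm A q < valleyPerm A p := by
  rw [valleyPerm_apply_of_lt_card A hq,
    valleyPerm_apply_of_lt_card A ((show (p : ℕ) < q from hpq).trans hq)]
  exact sortedGT_iff_getElem_gt_getElem_of_lt.1 (sortedGT_sort A) hpq

theorem valleyPerm_lt_valleyPerm_of_card_le (A : Finset (Fin n)) {p q : Fin n} (hpq : p < q)
    (hp : #A ≤ (p : ℕ)) : valleyPerm A p < valleyPerm A q := by
  rw [valleyPerm_apply_of_card_le A hp, valleyPerm_apply_of_card_le A (hp.trans hpq.le)]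
  exact sortedLT_iff_getElem_lt_getElem_of_lt.1 (sortedLT_sort Aᶜ) (by omega)

theorem valleyPerm_inv_lt_inv_iff (A : Finset (Fin n)) (v w : Fin n) :
    (valleyPerm A)⁻¹ v < (valleyPerm A)⁻¹ w ↔ w < v ∧ v ∈ A ∨ v < w ∧ w ∉ A := by
  obtain ⟨p, rfl⟩ := (valleyPerm A).surjective v
  obtain ⟨q, rfl⟩ := (valleyPerm A).surjective w
  simp only [Equiv.Perm.coe_inv, Equiv.symm_apply_apply, valleyPerm_mem_iff]
  constructor
  · intro hpq
    by_cases hq : (q : ℕ) < #A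
    · exact .inl ⟨valleyPerm_lt_valleyPerm_of_lt_card A hpq hq,
        (show (p : ℕ) < q from hpq).trans hq⟩
    by_cases hp : (p : ℕ) < #A
    · rcases lt_or_gt_of_ne ((valleyPerm A).injective.ne hpq.ne) with h | h
      · exact .inr ⟨h, hq⟩
      · exact .inl ⟨h, hp⟩
    · exact .inr ⟨valleyPerm_lt_valleyPerm_of_card_le A hpq (not_lt.1 hp), hq⟩
  · rintro (⟨h, hp⟩ | ⟨h, hq⟩) <;> by_contra! hqp <;> rcases hqp.lt_or_eq with hqp | rfl
    · exact (valleyPerm_lt_valleyPerm_of_lt_card A hqp hp).asymm h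
    · exact lt_irrefl _ h
    · exact (valleyPerm_lt_valleyPerm_of_card_le A hqp (not_lt.1 hq)).asymm h
    · exact lt_irrefl _ h

theorem valleyPerm_congr {A B : Finset (Fin n)} (h : ∀ v w : Fin n, v < w → (w ∈ A ↔ w ∈ B)) :
    valleyPerm A = valleyPerm B := by
  rw [← inv_inj]
  refine Equiv.Perm.eq_of_lt_iff_lt fun v w => ?_
  rw [valleyPerm_inv_lt_inv_iff, valleyPerm_inv_lt_inv_iff]
  have := h w v
  have := h v w
  tauto

theorem exists_eq_valleyPerm (σ : Equiv.Perm (Fin n)) (h : peaksCount (ofFn σ) = 0) :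
    ∃ A, σ = valleyPerm A := by
  have hnd : (ofFn σ).Nodup := nodup_ofFn.2 σ.injective
  obtain ⟨l₁, l₂, hl, h₁, h₂⟩ := exists_append_of_peaksCount_eq_zero hnd.isChain h
  rw [hl, nodup_append] at hnd
  refine ⟨l₁.toFinset, Equiv.coe_fn_injective (ofFn_injective ?_)⟩
  have hl₂ : l₂.toFinset = l₁.toFinsetᶜ := by
    ext v
    have hv : v ∈ l₁ ++ l₂ := hl ▸ mem_ofFn.2 ⟨σ.symm v, by simp⟩
    simp only [mem_toFinset, mem_compl]
    grind
  rw [hl, ofFn_valleyPerm, valleyList, ← hl₂,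
    (toFinset_sort (· ≥ ·) hnd.1).2 ((isChain_iff_pairwise.1 h₁).imp le_of_lt),
    (toFinset_sort (· ≤ ·) hnd.2.1).2 ((isChain_iff_pairwise.1 h₂).imp le_of_lt)]

end ValleyPerm

theorem descentIndicator_valleyPerm_inv {m : ℕ} (A : Finset (Fin (m + 1))) (i : Fin m) :
    descentIndicator ⇑(valleyPerm A)⁻¹ i = decide (i.succ ∈ A) := by
  simp only [descentIndicator, decide_eq_decide]
  rw [valleyPerm_inv_lt_inv_iff]
  simp [not_lt_of_gt]

def descentIndicatorEquiv (m : ℕ) :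
    {π : Equiv.Perm (Fin (m + 1)) // pkP π⁻¹ = 0} ≃ (Fin m → Bool) where
  toFun π := descentIndicator π.1
  invFun w := ⟨(valleyPerm {v | (Fin.cons false w : Fin (m + 1) → Bool) v})⁻¹,
    by rw [pkP, inv_inv]; exact peaksCount_ofFn_valleyPerm _⟩
  left_inv := by
    rintro ⟨π, hπ⟩
    obtain ⟨A, hA⟩ := exists_eq_valleyPerm π⁻¹ hπ
    rw [inv_eq_iff_eq_inv] at hA
    subst hA
    refine Subtype.ext (congrArg (·⁻¹) (valleyPerm_congr fun v w hvw => ?_))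
    cases w using Fin.cases with
    | zero => exact absurd hvw (Fin.not_lt_zero v)
    | succ i => simp only [Finset.mem_filter, mem_univ, true_and, Fin.cons_succ,
        descentIndicator_valleyPerm_inv, decide_eq_true_eq]
  right_inv w := funext fun i => by
    change descentIndicator ⇑(valleyPerm _)⁻¹ i = w i
    rw [descentIndicator_valleyPerm_inv]
    simp

theorem lpkP_eq_countTrueBlocks {m : ℕ} (π : Equiv.Perm (Fin (m + 1))) :
    lpkP π = countTrueBlocks false (ofFn (descentIndicator π)) := by
  rw [lpkP, leftPeaksCount_eq_countTrueBlocks (nodup_ofFn.2 π.injective).isChain, descentWord_ofFn]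

theorem card_lpk_k_ipk_zero (n k : ℕ) (hn : 1 ≤ n) :
    Nat.card {π : Equiv.Perm (Fin n) // lpkP π = k ∧ pkP π⁻¹ = 0}
      = Nat.choose n (2 * k) := by
  obtain ⟨m, rfl⟩ : ∃ m, n = m + 1 := ⟨n - 1, by omega⟩
  calc Nat.card {π : Equiv.Perm (Fin (m + 1)) // lpkP π = k ∧ pkP π⁻¹ = 0}
      = Nat.card {π : {π : Equiv.Perm (Fin (m + 1)) // pkP π⁻¹ = 0} // lpkP π.1 = k} :=
        Nat.card_congr ((Equiv.subtypeSubtypeEquivSubtypeInter _ _).trans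
          (Equiv.subtypeEquivRight fun _ => and_comm)).symm
    _ = Nat.card {w : Fin m → Bool // countTrueBlocks false (ofFn w) = k} :=
        Nat.card_congr ((descentIndicatorEquiv m).subtypeEquiv fun π => by
          rw [lpkP_eq_countTrueBlocks]; rfl)
    _ = (m + 1).choose (2 * k) := by
        rw [Nat.card_eq_fintype_card, Fintype.card_subtype, card_countTrueBlocks_ofFn]
        rfl
end

section
/- For all n ≥ 1 and k ≥ 1, the number of permutations π ∈ S_n with udr(π) = k and pk(π⁻¹) = 0 equals the binomial coefficient C(n−1, k−1). -/
open Finset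

/-!
The inverse of `π` has no peaks exactly when every entry `π (j + 1)` is a left-to-right maximum
or a left-to-right minimum: a value `v` lying between two earlier values would force a peak of
`π⁻¹` at the latest-placed value of that range. Such a `π` is therefore determined by its ascent
word `w ∈ {↑, ↓}ⁿ⁻¹`, and every word occurs (rank the integer sequence `±j`, signed by `w`).
The number of up-down runs of `π` is one more than the number of letter changes in `↑w`, and a
word with a prescribed first letter is determined by the set of positions where it changes,
so there are `C(n - 1, k - 1)` of them.
-/

section Lists
variable {α : Type*} [LinearOrder α]

def changeCount : List Bool → ℕ
  | a :: b :: l => (if a = b then 0 else 1) + changeCount (b :: l)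
  | _ => 0

def ascents : List α → List Bool
  | a :: b :: l => decide (a < b) :: ascents (b :: l)
  | _ => []

theorem turnsCount_eq_changeCount_ascents :
    ∀ {l : List α}, l.IsChain (· ≠ ·) → turnsCount l = changeCount (ascents l)
  | [], _ | [_], _ | [_, _], _ => rfl
  | a :: b :: c :: l, h => by
    obtain ⟨hab, hbc, -⟩ : a ≠ b ∧ b ≠ c ∧ _ := by simpa using h
    simp only [turnsCount, ascents, changeCount]
    rw [turnsCount_eq_changeCount_ascents (List.isChain_cons_cons.mp h).2]
    congr 1
    rcases hab.lt_or_gt with hab | hab <;> rcases hbc.lt_or_gt with hbc | hbc <;>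
      simp [hab, hbc, hab.not_gt, hbc.not_gt]

theorem udrCount_eq_changeCount_ascents {l : List α} (h : l.IsChain (· ≠ ·)) (hl : l ≠ []) :
    udrCount l = changeCount (true :: ascents l) + 1 := by
  match l, h with
  | [_], _ => rfl
  | a :: b :: l, h =>
    have hab : a ≠ b := (List.isChain_cons_cons.mp h).1
    simp only [udrCount, birunsCount, initDesc, ascents, changeCount, if_neg hl,
      turnsCount_eq_changeCount_ascents h]
    rcases hab.lt_or_gt with hab | hab <;> simp [hab, hab.not_gt, add_comm]

def ascentWord {m : ℕ} (f : Fin (m + 1) → α) (i : Fin m) : Bool := decide (f i.castSucc < f i.succ)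

theorem ascents_ofFn {m : ℕ} (f : Fin (m + 1) → α) :
    ascents (List.ofFn f) = List.ofFn (ascentWord f) := by
  induction m with
  | zero => rfl
  | succ m ih =>
    have hcons : ascents (List.ofFn f)
        = decide (f 0 < f 1) :: ascents (List.ofFn fun i => f i.succ) := by
      rw [List.ofFn_succ, List.ofFn_succ (f := fun i => f i.succ)]
      rfl
    rw [hcons, ih, List.ofFn_succ]
    rfl

theorem peaksCount_eq_zero_iff :
    ∀ {l : List α}, peaksCount l = 0 ↔
      ∀ i (h : i + 2 < l.length), ¬(l[i] < l[i + 1] ∧ l[i + 2] < l[i + 1])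
  | [] | [_] | [_, _] => by simp [peaksCount]
  | a :: b :: c :: l => by
    rw [peaksCount, Nat.add_eq_zero_iff, peaksCount_eq_zero_iff]
    simp only [ite_eq_right_iff, one_ne_zero, imp_false]
    constructor
    · rintro ⟨h0, hl⟩ (_ | i) hi
      · exact h0
      · exact hl i (by simp at hi ⊢; omega)
    · intro h
      exact ⟨h 0 (by simp), fun i hi => h (i + 1) (by simp at hi ⊢; omega)⟩

end Lists

section NoPeaks
variable {α : Type*} [LinearOrder α] {n : ℕ}

theorem peaksCount_ofFn_eq_zero_iff (f : Fin n → α) :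
    peaksCount (List.ofFn f) = 0 ↔
      ∀ a b c : Fin n, (a : ℕ) + 1 = b → (b : ℕ) + 1 = c → ¬(f a < f b ∧ f c < f b) := by
  simp only [peaksCount_eq_zero_iff, List.length_ofFn, List.getElem_ofFn]
  constructor
  · rintro h ⟨a, ha⟩ ⟨_, hb⟩ ⟨_, hc⟩ rfl rfl
    exact h a hc
  · exact fun h i hi => h ⟨i, by omega⟩ ⟨i + 1, by omega⟩ ⟨i + 2, hi⟩ rfl rfl

theorem apply_le_max_of_peaksCount_eq_zero {f : Fin n → α} (hf : Function.Injective f)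
    (hpk : peaksCount (List.ofFn f) = 0) {a u b : Fin n} (hau : a ≤ u) (hub : u ≤ b) :
    f u ≤ max (f a) (f b) := by
  obtain ⟨v, hv, hvmax⟩ := (Finset.Icc a b).exists_max_image f ⟨u, Finset.mem_Icc.2 ⟨hau, hub⟩⟩
  refine (hvmax u (Finset.mem_Icc.2 ⟨hau, hub⟩)).trans ?_
  by_contra! hlt
  rw [max_lt_iff] at hlt
  obtain ⟨hav, hvb⟩ := Finset.mem_Icc.1 hv
  replace hav : (a : ℕ) < v := Fin.lt_def.1 (hav.lt_of_ne (by rintro rfl; exact hlt.1.false))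
  replace hvb : (v : ℕ) < b := Fin.lt_def.1 (hvb.lt_of_ne (by rintro rfl; exact hlt.2.false))
  have hneighbour : ∀ w : Fin n, a ≤ w → w ≤ b → w ≠ v → f w < f v := fun w hw₁ hw₂ hwv =>
    (hvmax w (Finset.mem_Icc.2 ⟨hw₁, hw₂⟩)).lt_of_ne (hf.ne hwv)
  refine (peaksCount_ofFn_eq_zero_iff f).1 hpk ⟨v - 1, by omega⟩ v ⟨v + 1, by omega⟩
    (by simp; omega) rfl ⟨hneighbour _ ?_ ?_ ?_, hneighbour _ ?_ ?_ ?_⟩ <;>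
    simp [Fin.le_def, Fin.ext_iff] <;> omega

end NoPeaks

section RecordWord
variable {α β : Type*} [LinearOrder α] [LinearOrder β] {m : ℕ}

def IsRecordWord (w : Fin m → Bool) (f : Fin (m + 1) → α) : Prop :=
  ∀ (j : Fin m) (i : Fin (m + 1)), i ≤ j.castSucc → (f i < f j.succ ↔ w j = true)

namespace IsRecordWord
variable {w : Fin m → Bool} {f : Fin (m + 1) → α} {g : Fin (m + 1) → β}

theorem ascentWord_eq (hf : IsRecordWord w f) : ascentWord f = w :=
  funext fun j => Bool.eq_iff_iff.2 (by simpa [ascentWord] using hf j j.castSucc le_rfl)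

theorem of_lt_iff_lt (hf : IsRecordWord w f) (h : ∀ i j, g i < g j ↔ f i < f j) :
    IsRecordWord w g :=
  fun j i hij => (h i j.succ).trans (hf j i hij)

theorem lt_iff_lt (hf : IsRecordWord w f) (hg : IsRecordWord w g) (hf_inj : f.Injective)
    (hg_inj : g.Injective) (i j : Fin (m + 1)) : f i < f j ↔ g i < g j := by
  have forward : ∀ i j, i < j → (f i < f j ↔ g i < g j) := by
    intro i j hij
    obtain ⟨j, rfl⟩ := Fin.exists_succ_eq.2 (Fin.ne_zero_of_lt hij)
    rw [hf j i (Fin.le_castSucc_iff.2 hij), hg j i (Fin.le_castSucc_iff.2 hij)]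
  rcases lt_trichotomy i j with hij | rfl | hji
  · exact forward i j hij
  · simp
  · rw [← not_iff_not, not_lt, not_lt, (hf_inj.ne hji.ne).le_iff_lt, (hg_inj.ne hji.ne).le_iff_lt]
    exact forward j i hji

end IsRecordWord

theorem Equiv.Perm.eq_of_lt_iff_lt_s4 {ι : Type*} [LinearOrder ι] [Finite ι] {π τ : Equiv.Perm ι}
    (h : ∀ i j, π i < π j ↔ τ i < τ j) : π = τ := by
  have hmono : StrictMono (τ ∘ π.symm) := fun x y hxy => by
    simpa using (h (π.symm x) (π.symm y)).1 (by simpa using hxy)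
  ext x
  simpa using (congrFun hmono.eq_id (π x)).symm

theorem exists_perm_lt_iff_lt {n : ℕ} {g : Fin n → α} (hg : g.Injective) :
    ∃ π : Equiv.Perm (Fin n), ∀ i j, π i < π j ↔ g i < g j := by
  have hmono : StrictMono (g ∘ Tuple.sort g) :=
    (Tuple.monotone_sort g).strictMono_of_injective (hg.comp (Tuple.sort g).injective)
  refine ⟨(Tuple.sort g)⁻¹, fun i j => ?_⟩
  rw [← hmono.lt_iff_lt]
  simp

def recordShape (w : Fin m → Bool) (j : Fin (m + 1)) : ℤ :=
  if (Fin.cons false w : Fin (m + 1) → Bool) j then j else -j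

theorem natAbs_recordShape (w : Fin m → Bool) (j : Fin (m + 1)) :
    (recordShape w j).natAbs = j := by
  unfold recordShape; split_ifs <;> simp

theorem recordShape_injective (w : Fin m → Bool) : (recordShape w).Injective := fun i j h =>
  Fin.ext (by rw [← natAbs_recordShape w i, h, natAbs_recordShape])

theorem isRecordWord_recordShape (w : Fin m → Bool) : IsRecordWord w (recordShape w) := by
  intro j i hij
  have hi : (recordShape w i).natAbs ≤ j := by
    rw [natAbs_recordShape]; exact Fin.le_def.1 hij
  have hsucc : recordShape w j.succ = if w j then (j + 1 : ℤ) else -(j + 1) := by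
    cases h : w j <;> simp [recordShape, h]
  rw [hsucc]
  cases w j <;> simp <;> omega

theorem exists_perm_isRecordWord (w : Fin m → Bool) :
    ∃ π : Equiv.Perm (Fin (m + 1)), IsRecordWord w π :=
  let ⟨π, hπ⟩ := exists_perm_lt_iff_lt (recordShape_injective w)
  ⟨π, (isRecordWord_recordShape w).of_lt_iff_lt hπ⟩

end RecordWord

section Permutations
variable {m : ℕ}

theorem pkP_inv_eq_zero_iff (π : Equiv.Perm (Fin (m + 1))) :
    pkP π⁻¹ = 0 ↔ IsRecordWord (ascentWord π) π := by
  rw [pkP]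
  constructor
  · intro hpk j i hij
    have not_between : ∀ p q, p ≤ j.castSucc → q ≤ j.castSucc → π p < π j.succ →
        π j.succ < π q → False := by
      intro p q hp hq hpj hjq
      have := apply_le_max_of_peaksCount_eq_zero π⁻¹.injective hpk hpj.le hjq.le
      simp only [Equiv.Perm.coe_inv, Equiv.symm_apply_apply, le_max_iff] at this
      rcases this with h | h
      · exact (h.trans hp).not_gt Fin.castSucc_lt_succ
      · exact (h.trans hq).not_gt Fin.castSucc_lt_succ
    rw [ascentWord, decide_eq_true_iff]
    constructor
    · intro hi
      by_contra! hj
      exact not_between i j.castSucc hij le_rfl hi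
        (hj.lt_of_ne (π.injective.ne (Fin.castSucc_lt_succ).ne'))
    · intro hj
      by_contra! hi
      exact not_between j.castSucc i le_rfl hij hj
        (hi.lt_of_ne (π.injective.ne (Fin.le_castSucc_iff.1 hij).ne'))
  · rw [peaksCount_ofFn_eq_zero_iff]
    rintro hrec a b c hab hbc ⟨hpa, hpc⟩
    obtain ⟨j, hj⟩ := Fin.exists_succ_eq.2 (Fin.ne_zero_of_lt hpa)
    have hab' := hrec j (π⁻¹ a) (Fin.le_castSucc_iff.2 (hj ▸ hpa))
    have hcb' := hrec j (π⁻¹ c) (Fin.le_castSucc_iff.2 (hj ▸ hpc))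
    rw [hj] at hab' hcb'
    simp only [Equiv.Perm.coe_inv, Equiv.apply_symm_apply] at hab' hcb'
    have hab : a < b := Fin.lt_def.2 (by omega)
    have hbc : b < c := Fin.lt_def.2 (by omega)
    exact hbc.not_gt (hcb'.2 (hab'.1 hab))

theorem udrP_eq_changeCount (π : Equiv.Perm (Fin (m + 1))) :
    udrP π = changeCount (true :: List.ofFn (ascentWord π)) + 1 := by
  rw [udrP, udrCount_eq_changeCount_ascents (List.nodup_ofFn.2 π.injective).isChain
    (by simp), ascents_ofFn]

noncomputable def ascentWordEquiv (m : ℕ) :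
    {π : Equiv.Perm (Fin (m + 1)) // pkP π⁻¹ = 0} ≃ (Fin m → Bool) := by
  refine Equiv.ofBijective (fun π => ascentWord π.1) ⟨?_, fun w => ?_⟩
  · rintro ⟨π, hπ⟩ ⟨τ, hτ⟩ (h : ascentWord π = ascentWord τ)
    rw [pkP_inv_eq_zero_iff] at hπ hτ
    rw [h] at hπ
    exact Subtype.ext (Equiv.Perm.eq_of_lt_iff_lt_s4 (hπ.lt_iff_lt hτ π.injective τ.injective))
  · obtain ⟨π, hπ⟩ := exists_perm_isRecordWord w
    refine ⟨⟨π, (pkP_inv_eq_zero_iff π).2 ?_⟩, hπ.ascentWord_eq⟩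
    rwa [hπ.ascentWord_eq]

end Permutations

section Words
variable {m : ℕ}

def switches (b : Bool) (w : Fin m → Bool) : Finset (Fin m) :=
  {i | (Fin.cons b w : Fin (m + 1) → Bool) i.castSucc ≠ w i}

theorem zero_mem_switches {b : Bool} {w : Fin (m + 1) → Bool} :
    0 ∈ switches b w ↔ b ≠ w 0 := by
  simp [switches]

theorem succ_mem_switches {b : Bool} {w : Fin (m + 1) → Bool} {i : Fin m} :
    i.succ ∈ switches b w ↔ i ∈ switches (w 0) (Fin.tail w) := by
  conv_rhs => rw [← Fin.cons_self_tail w]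
  simp [switches, Fin.tail]

theorem card_switches_succ (b : Bool) (w : Fin (m + 1) → Bool) :
    #(switches b w) = (if b = w 0 then 0 else 1) + #(switches (w 0) (Fin.tail w)) := by
  rw [← Finset.filter_univ_mem (switches b w), Fin.card_filter_univ_succ']
  simp only [zero_mem_switches, succ_mem_switches, Finset.filter_univ_mem]
  split_ifs <;> simp_all

theorem changeCount_cons_ofFn (b : Bool) (w : Fin m → Bool) :
    changeCount (b :: List.ofFn w) = #(switches b w) := by
  induction m generalizing b with
  | zero => simp [changeCount, switches]
  | succ m ih =>
    rw [List.ofFn_succ, changeCount, ih, card_switches_succ]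
    rfl

theorem switches_injective (b : Bool) : (switches (m := m) b).Injective := by
  induction m generalizing b with
  | zero => exact fun _ _ _ => Subsingleton.elim _ _
  | succ m ih =>
    intro w w' h
    have h0 : w 0 = w' 0 := by
      have := congrArg (0 ∈ ·) h
      simp only [zero_mem_switches, eq_iff_iff] at this
      cases b <;> cases hw : w 0 <;> cases hw' : w' 0 <;> simp_all
    have htail : Fin.tail w = Fin.tail w' := by
      refine ih (w 0) (Finset.ext fun i => ?_)
      rw [← succ_mem_switches, h, succ_mem_switches, h0]
    rw [← Fin.cons_self_tail w, ← Fin.cons_self_tail w', h0, htail]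

theorem card_changeCount_eq_choose (b : Bool) (m K : ℕ) :
    Nat.card {w : Fin m → Bool // changeCount (b :: List.ofFn w) = K} = m.choose K := by
  have hbij : (switches (m := m) b).Bijective :=
    (Fintype.bijective_iff_injective_and_card _).2 ⟨switches_injective b, by simp⟩
  calc _ = Nat.card {S : Finset (Fin m) // #S = K} :=
        Nat.card_congr ((Equiv.ofBijective _ hbij).subtypeEquiv fun w => by
          simp [changeCount_cons_ofFn])
    _ = m.choose K := by simp [Nat.card_eq_fintype_card]

end Words

theorem card_udr_k_ipk_zero (n k : ℕ) (hn : 1 ≤ n) (hk : 1 ≤ k) :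
    Nat.card {π : Equiv.Perm (Fin n) // udrP π = k ∧ pkP π⁻¹ = 0}
      = Nat.choose (n - 1) (k - 1) := by
  obtain ⟨m, rfl⟩ : ∃ m, n = m + 1 := ⟨n - 1, by omega⟩
  obtain ⟨K, rfl⟩ : ∃ K, k = K + 1 := ⟨k - 1, by omega⟩
  rw [Nat.add_sub_cancel, Nat.add_sub_cancel, ← card_changeCount_eq_choose true m K]
  calc Nat.card {π : Equiv.Perm (Fin (m + 1)) // udrP π = K + 1 ∧ pkP π⁻¹ = 0}
      = Nat.card {π : {π : Equiv.Perm (Fin (m + 1)) // pkP π⁻¹ = 0} // udrP π.1 = K + 1} :=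
        Nat.card_congr ((Equiv.subtypeSubtypeEquivSubtypeInter _ _).trans
          (Equiv.subtypeEquivRight fun _ => and_comm)).symm
    _ = Nat.card {w : Fin m → Bool // changeCount (true :: List.ofFn w) = K} :=
        Nat.card_congr ((ascentWordEquiv m).subtypeEquiv fun π => by
          rw [udrP_eq_changeCount, Nat.add_right_cancel_iff]
          rfl)
end

section
/- The generating function identity Σ_{n≥0} A_n(s,t) u^n = Σ_{k≥0} (1/k!) (log(1/(1−(1−s)(1−t)u)))^k · A_k(s)A_k(t)/((1−s)^k(1−t)^k) holds as formal power series, where A_n(s,t) is the two-sided Eulerian polynomial and A_k the ordinary Eulerian polynomial. -/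
open Finset

/-- The ordinary Eulerian polynomial in the variable `X v`, with `A_0 = 1`. -/
noncomputable def eulerPoly (v : Fin 2) (k : ℕ) : MvPolynomial (Fin 2) ℚ :=
  if k = 0 then 1 else ∑ π : Equiv.Perm (Fin k), MvPolynomial.X v ^ (desP π + 1)

/-- The two-sided Eulerian polynomial `A_n(s,t)` with `s = X 0`, `t = X 1`. -/
noncomputable def eulerTwo (n : ℕ) : MvPolynomial (Fin 2) ℚ :=
  if n = 0 then 1 else
    ∑ π : Equiv.Perm (Fin n),
      MvPolynomial.X 0 ^ (desP π + 1) * MvPolynomial.X (1 : Fin 2) ^ (desP π⁻¹ + 1)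

/-- `log(1/(1-u)) = Σ_{m ≥ 1} u^m/m`. -/
noncomputable def logInvSer : PowerSeries ℚ :=
  PowerSeries.mk fun m => if m = 0 then 0 else (1 : ℚ) / m

/-!
Divide the coefficient of `u ^ n` on both sides by `((1 - s) (1 - t)) ^ (n + 1)` and compare
the coefficients of `s ^ j t ^ m`; this transform is injective on polynomials. On the left one
gets the Carlitz–Roselle–Scoville number `C(j m + n - 1, n)` of weakly increasing words of
length `n` in `[j] × [m]` ordered lexicographically; grouping such words by the permutation `π`
that sorts their second coordinates gives the transform of `A_n(s, t)`, namely
`∑_π C(j + n - 1 - des π, n) C(m + n - 1 - des π⁻¹, n)`. On the right, Worpitzky's identity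
`A_k(s) / (1 - s) ^ (k + 1) = ∑_j j ^ k s ^ j` (again proved by sorting words) turns the `k`-th
term into `[u^n] log(1/(1-u)) ^ k (j m) ^ k / k!`, and
`∑_k [u^n] log(1/(1-u)) ^ k x ^ k / k! = [u^n] (1 - u) ^ (-x) = x (x + 1) ⋯ (x + n - 1) / n!`.
-/

lemma Fin.natCard_orderEmbedding (n M : ℕ) : Nat.card (Fin n ↪o Fin M) = M.choose n := by
  rw [Nat.card_congr Set.powersetCard.ofFinEmbEquiv, Set.powersetCard.card,
    Nat.card_eq_fintype_card, Fintype.card_fin]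

namespace Tuple

variable {α β : Type*} [LinearOrder α] [LinearOrder β] {N : ℕ}

def descents (f : Fin (N + 1) → α) : Finset (Fin N) :=
  univ.filter fun i => f i.succ < f i.castSucc

lemma descentsCount_ofFn (f : Fin (N + 1) → α) :
    descentsCount (List.ofFn f) = #(descents f) := by
  induction N with
  | zero => simp [descents, descentsCount]
  | succ N ih =>
    have hcard : #(descents f) = (if f 1 < f 0 then 1 else 0) + #(descents (Fin.tail f)) := by
      simp only [descents, card_filter, Fin.sum_univ_succ]
      rfl
    rw [hcard, ← ih]
    simp only [List.ofFn_succ, descentsCount, Fin.tail, Fin.succ_zero_eq_one]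

lemma card_descents_le (f : Fin (N + 1) → α) : #(descents f) ≤ N :=
  (card_filter_le _ _).trans_eq (card_fin N)

def Compatible (f : Fin (N + 1) → α) (a : Fin (N + 1) → β) : Prop :=
  Monotone a ∧ ∀ i ∈ descents f, a i.castSucc < a i.succ

lemma compatible_iff_le_succ {f : Fin (N + 1) → α} {a : Fin (N + 1) → β} :
    Compatible f a ↔
      ∀ i, a i.castSucc ≤ a i.succ ∧ (i ∈ descents f → a i.castSucc < a i.succ) := by
  rw [Compatible, Fin.monotone_iff_le_succ]
  exact ⟨fun h i => ⟨h.1 i, h.2 i⟩, fun h => ⟨fun i => (h i).1, fun i => (h i).2⟩⟩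

def ascentsBefore (D : Finset (Fin N)) (i : Fin (N + 1)) : ℕ := #{k ∈ Dᶜ | k.castSucc < i}

lemma ascentsBefore_zero (D : Finset (Fin N)) : ascentsBefore D 0 = 0 := by
  simp [ascentsBefore]

lemma ascentsBefore_succ (D : Finset (Fin N)) (i : Fin N) :
    ascentsBefore D i.succ = ascentsBefore D i.castSucc + if i ∈ D then 0 else 1 := by
  simp only [ascentsBefore, Fin.castSucc_lt_succ_iff, Fin.castSucc_lt_castSucc_iff,
    le_iff_lt_or_eq, filter_or, filter_eq', mem_compl]
  split_ifs <;> simp [*]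

lemma ascentsBefore_le (D : Finset (Fin N)) (i : Fin (N + 1)) : ascentsBefore D i ≤ N - #D :=
  (card_filter_le _ _).trans_eq (by rw [card_compl, Fintype.card_fin])

lemma ascentsBefore_last (D : Finset (Fin N)) : ascentsBefore D (Fin.last N) = N - #D := by
  simp [ascentsBefore, Fin.castSucc_lt_last, card_compl]

lemma ascentsBefore_succ_le (D : Finset (Fin N)) (i : Fin N) :
    ascentsBefore D i.succ ≤ ascentsBefore D i.castSucc + 1 := by
  rw [ascentsBefore_succ]; split_ifs <;> omega

section StrictlyIncreasing

variable (D : Finset (Fin N)) {g : Fin (N + 1) → ℕ}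
  (hg : ∀ i : Fin N, g i.castSucc < g i.succ)
include hg

lemma ascentsBefore_le_of_lt_succ (i : Fin (N + 1)) : ascentsBefore D i ≤ g i := by
  induction i using Fin.induction with
  | zero => simp [ascentsBefore_zero]
  | succ i ih => have := hg i; have := ascentsBefore_succ_le D i; omega

lemma monotone_sub_ascentsBefore_of_lt_succ : Monotone fun i => g i - ascentsBefore D i :=
  Fin.monotone_iff_le_succ.2 fun i => by
    have := hg i; have := ascentsBefore_succ_le D i; omega

end StrictlyIncreasing

lemma compatible_iff_add_ascentsBefore {f : Fin (N + 1) → α} {j : ℕ}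
    {a : Fin (N + 1) → Fin j} :
    Compatible f a ↔ ∀ i : Fin N, (a i.castSucc : ℕ) + ascentsBefore (descents f) i.castSucc <
      a i.succ + ascentsBefore (descents f) i.succ := by
  rw [compatible_iff_le_succ]
  refine forall_congr' fun i => ?_
  rw [ascentsBefore_succ, Fin.le_def, Fin.lt_def]
  by_cases h : i ∈ descents f <;> simp only [h, if_true, if_false, true_implies, false_implies,
    and_true] <;> omega

def compatibleEquivOrderEmbedding (f : Fin (N + 1) → α) (j : ℕ) :
    {a : Fin (N + 1) → Fin j // Compatible f a} ≃
      (Fin (N + 1) ↪o Fin (j + N - #(descents f))) where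
  toFun a := OrderEmbedding.ofStrictMono
    (fun i => ⟨a.1 i + ascentsBefore (descents f) i, by
      have := (a.1 i).2
      have := ascentsBefore_le (descents f) i
      have := card_descents_le f
      omega⟩)
    (Fin.strictMono_iff_lt_succ.2 fun i => compatible_iff_add_ascentsBefore.1 a.2 i)
  invFun g :=
    have hg : ∀ i : Fin N, (g i.castSucc : ℕ) < g i.succ := fun i =>
      g.strictMono (Fin.castSucc_lt_succ (i := i))
    ⟨fun i => ⟨g i - ascentsBefore (descents f) i, by
      have := monotone_sub_ascentsBefore_of_lt_succ (descents f) (g := fun i => g i) hg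
        (Fin.le_last i)
      have := ascentsBefore_le_of_lt_succ (descents f) (g := fun i => g i) hg (Fin.last N)
      have := (g (Fin.last N)).2
      have := ascentsBefore_last (descents f)
      dsimp only at *
      omega⟩,
     compatible_iff_add_ascentsBefore.2 fun i => by
      have := ascentsBefore_le_of_lt_succ (descents f) (g := fun i => g i) hg i.castSucc
      have := ascentsBefore_le_of_lt_succ (descents f) (g := fun i => g i) hg i.succ
      have := hg i
      dsimp only
      omega⟩
  left_inv a := by ext i; simp
  right_inv g := by
    ext i
    simp [Nat.sub_add_cancel (ascentsBefore_le_of_lt_succ (descents f) (g := fun i => g i)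
      (fun i => g.strictMono (Fin.castSucc_lt_succ (i := i))) i)]

lemma natCard_compatible (f : Fin (N + 1) → α) (j : ℕ) :
    Nat.card {a : Fin (N + 1) → Fin j // Compatible f a} =
      (j + N - #(descents f)).choose (N + 1) := by
  rw [Nat.card_congr (compatibleEquivOrderEmbedding f j), Fin.natCard_orderEmbedding]

/-- Strictness across the descents of `σ` is exactly the stability of `Tuple.sort`. -/
lemma sort_eq_iff_compatible {y : Fin (N + 1) → α} {σ : Equiv.Perm (Fin (N + 1))} :
    sort y = σ ↔ Compatible σ (y ∘ σ) := by
  rw [eq_comm, eq_sort_iff]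
  refine ⟨fun ⟨hmono, hstable⟩ => ⟨hmono, fun i hi => ?_⟩,
    fun ⟨hmono, hdesc⟩ => ⟨hmono, ?_⟩⟩
  · refine (hmono (Fin.castSucc_lt_succ (i := i)).le).lt_of_ne fun he => ?_
    exact (mem_filter.1 hi).2.not_gt (hstable _ _ (Fin.castSucc_lt_succ (i := i)) he)
  · intro p q hpq he
    have hle : ∀ k ∈ Set.Icc p q, y (σ k) = y (σ p) := fun k hk =>
      le_antisymm (he ▸ hmono hk.2) (hmono hk.1)
    refine strictMonoOn_of_lt_succ Set.ordConnected_Icc (fun a ha hpa hsa => ?_)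
      (Set.left_mem_Icc.2 hpq.le) (Set.right_mem_Icc.2 hpq.le) hpq
    obtain ⟨k, rfl⟩ := (Fin.exists_castSucc_eq (i := a)).2
      fun h => ha (by rw [h, ← Fin.top_eq_last]; exact isMax_top)
    rw [Fin.orderSucc_castSucc] at hsa ⊢
    refine lt_of_le_of_ne (le_of_not_gt fun hk => ?_)
      (σ.injective.ne (Fin.castSucc_lt_succ (i := k)).ne)
    have := hdesc k (mem_filter.2 ⟨mem_univ _, hk⟩)
    simp only [Function.comp_apply, hle _ hpa, hle _ hsa] at this
    exact this.false

lemma descents_eq_of_sort_eq {y : Fin (N + 1) → α} {σ : Equiv.Perm (Fin (N + 1))}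
    (h : sort y = σ) : descents y = descents ⇑σ⁻¹ := by
  obtain ⟨hmono, hstable⟩ := eq_sort_iff.1 h.symm
  ext i
  simp only [descents, mem_filter, mem_univ, true_and]
  constructor
  · intro hi
    refine lt_of_not_ge fun hle => hi.not_ge ?_
    simpa using hmono hle
  · intro hi
    have hle : y i.succ ≤ y i.castSucc := by simpa using hmono hi.le
    refine hle.lt_of_ne fun he => (Fin.castSucc_lt_succ (i := i)).not_gt ?_
    simpa using hstable _ _ hi (by simpa using he)

def sortFiberEquivCompatible (σ : Equiv.Perm (Fin (N + 1))) :
    {y : Fin (N + 1) → α // sort y = σ} ≃ {a : Fin (N + 1) → α // Compatible σ a} where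
  toFun y := ⟨y.1 ∘ σ, sort_eq_iff_compatible.1 y.2⟩
  invFun a :=
    ⟨a.1 ∘ ⇑σ⁻¹, sort_eq_iff_compatible.2 (by simpa [Function.comp_def] using a.2)⟩
  left_inv y := by ext; simp
  right_inv a := by ext; simp

lemma natCard_sort_eq (σ : Equiv.Perm (Fin (N + 1))) (j : ℕ) :
    Nat.card {y : Fin (N + 1) → Fin j // sort y = σ} =
      (j + N - #(descents σ)).choose (N + 1) := by
  rw [Nat.card_congr (sortFiberEquivCompatible σ), natCard_compatible]

/-- Worpitzky's identity, counting all words by the permutation sorting them. -/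
theorem sum_choose_descents_eq_pow (N j : ℕ) :
    ∑ σ : Equiv.Perm (Fin (N + 1)), (j + N - #(descents σ)).choose (N + 1) = j ^ (N + 1) := by
  calc ∑ σ : Equiv.Perm (Fin (N + 1)), (j + N - #(descents σ)).choose (N + 1)
      = Nat.card (Σ σ, {y : Fin (N + 1) → Fin j // sort y = σ}) := by
        rw [Nat.card_sigma]
        simp only [natCard_sort_eq]
    _ = j ^ (N + 1) := by rw [Nat.card_congr (Equiv.sigmaFiberEquiv sort), Nat.card_fun]; simp

lemma monotone_toLex_iff {a : Fin (N + 1) → α} {b : Fin (N + 1) → β} :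
    Monotone (fun i => toLex (a i, b i)) ↔ Compatible b a := by
  rw [compatible_iff_le_succ, Fin.monotone_iff_le_succ]
  refine forall_congr' fun i => ?_
  simp only [Prod.Lex.toLex_le_toLex, descents, mem_filter, mem_univ, true_and]
  constructor
  · rintro (h | ⟨h, hb⟩)
    · exact ⟨h.le, fun _ => h⟩
    · exact ⟨h.le, fun hb' => absurd hb hb'.not_ge⟩
  · rintro ⟨h, hb⟩
    rcases h.lt_or_eq with h | h
    · exact Or.inl h
    · exact Or.inr ⟨h, le_of_not_gt fun hb' => (hb hb').ne h⟩

lemma natCard_monotone (γ : Type*) [LinearOrder γ] [Fintype γ] :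
    Nat.card {w : Fin (N + 1) → γ // Monotone w} = (Fintype.card γ + N).choose (N + 1) := by
  let e := monoEquivOfFin γ rfl
  have hconst : descents (fun _ : Fin (N + 1) => (0 : ℕ)) = ∅ := by simp [descents]
  have hequiv : {w : Fin (N + 1) → γ // Monotone w} ≃
      {a : Fin (N + 1) → Fin (Fintype.card γ) // Compatible (fun _ => (0 : ℕ)) a} :=
    { toFun w := ⟨e.symm ∘ w.1, by simpa [Compatible, hconst] using e.symm.monotone.comp w.2⟩
      invFun a := ⟨e ∘ a.1, e.monotone.comp a.2.1⟩
      left_inv w := by ext; simp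
      right_inv a := by ext; simp }
  rw [Nat.card_congr hequiv, natCard_compatible, hconst, card_empty, Nat.sub_zero]

def monotoneLexEquiv :
    {w : Fin (N + 1) → α ×ₗ β // Monotone w} ≃
      Σ b : Fin (N + 1) → β, {a : Fin (N + 1) → α // Compatible b a} where
  toFun w := ⟨fun i => (ofLex (w.1 i)).2, fun i => (ofLex (w.1 i)).1, monotone_toLex_iff.1 w.2⟩
  invFun p := ⟨fun i => toLex (p.2.1 i, p.1 i), monotone_toLex_iff.2 p.2.2⟩
  left_inv _ := rfl
  right_inv _ := rfl

/-- The Carlitz–Roselle–Scoville identity: count the weakly increasing words in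
`Fin m ×ₗ Fin j`, first by their second coordinates `b`, then by the permutation sorting `b`. -/
theorem sum_choose_descents_mul_choose_descents_inv (N j m : ℕ) :
    ∑ σ : Equiv.Perm (Fin (N + 1)),
      (j + N - #(descents σ)).choose (N + 1) * (m + N - #(descents ⇑σ⁻¹)).choose (N + 1) =
      (j * m + N).choose (N + 1) := by
  calc ∑ σ : Equiv.Perm (Fin (N + 1)),
        (j + N - #(descents σ)).choose (N + 1) * (m + N - #(descents ⇑σ⁻¹)).choose (N + 1)
      = ∑ σ : Equiv.Perm (Fin (N + 1)), ∑ b with sort b = σ,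
          (m + N - #(descents (b : Fin (N + 1) → Fin j))).choose (N + 1) := by
        refine sum_congr rfl fun σ _ => ?_
        rw [sum_congr rfl fun b hb => by rw [descents_eq_of_sort_eq (mem_filter.1 hb).2], sum_const,
          ← Fintype.card_subtype, ← Nat.card_eq_fintype_card, natCard_sort_eq, smul_eq_mul]
    _ = ∑ b : Fin (N + 1) → Fin j, (m + N - #(descents b)).choose (N + 1) :=
        sum_fiberwise _ _ _
    _ = Nat.card {w : Fin (N + 1) → Fin m ×ₗ Fin j // Monotone w} := by
        simp only [Nat.card_congr monotoneLexEquiv, Nat.card_sigma, natCard_compatible]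
    _ = (j * m + N).choose (N + 1) := by rw [natCard_monotone]; simp [mul_comm]

end Tuple

section LogSeries

open PowerSeries Nat

lemma logInvSer_eq_X_mul : logInvSer = X * PowerSeries.mk fun m => (1 : ℚ) / (m + 1) := by
  ext n
  cases n with
  | zero => simp [logInvSer]
  | succ n => simp [logInvSer, coeff_succ_X_mul]

lemma coeff_logInvSer_pow_of_lt {n k : ℕ} (h : n < k) : coeff n (logInvSer ^ k) = 0 := by
  rw [logInvSer_eq_X_mul, mul_pow, coeff_X_pow_mul', if_neg h.not_ge]

lemma derivative_logInvSer : derivative ℚ logInvSer = PowerSeries.mk 1 := by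
  ext n
  simp only [logInvSer, one_div, coeff_derivative, coeff_mk, Nat.add_eq_zero_iff, one_ne_zero,
    and_false, if_false, cast_add, cast_one, Pi.one_apply]
  field_simp

lemma one_sub_X_mul_derivative_logInvSer_pow (k : ℕ) :
    (1 - X) * derivative ℚ (logInvSer ^ (k + 1)) =
      ((k + 1 : ℕ) : ℚ⟦X⟧) * logInvSer ^ k := by
  rw [Derivation.leibniz_pow, derivative_logInvSer, Nat.add_sub_cancel, smul_eq_mul, nsmul_eq_mul,
    mul_left_comm, mul_comm (1 - X), mul_assoc, mk_one_mul_one_sub_eq_one, mul_one]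

lemma coeff_logInvSer_pow_succ_succ (n k : ℕ) :
    (n + 1) * coeff (n + 1) (logInvSer ^ (k + 1)) =
      n * coeff n (logInvSer ^ (k + 1)) + (k + 1) * coeff n (logInvSer ^ k) := by
  have h := congrArg (coeff n) (one_sub_X_mul_derivative_logInvSer_pow k)
  rw [sub_mul, one_mul, map_sub, ← map_natCast (C (R := ℚ)), coeff_C_mul, coeff_derivative] at h
  cases n with
  | zero => simpa using h
  | succ n =>
    rw [coeff_succ_X_mul, coeff_derivative] at h
    push_cast at h ⊢
    linarith

variable (x : ℚ)

/-- `[u^n] exp (x log (1/(1-u))) = [u^n] (1-u)^(-x)`; the `k`-th term of the exponential starts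
at `u^k`. -/
noncomputable def risingCoeff (n : ℕ) : ℚ :=
  ∑ k ∈ range (n + 1), coeff n (logInvSer ^ k) / k ! * x ^ k

lemma succ_mul_risingCoeff_succ (n : ℕ) :
    (n + 1) * risingCoeff x (n + 1) = (x + n) * risingCoeff x n := by
  have hrec : ∀ k, (n + 1) * (coeff (n + 1) (logInvSer ^ (k + 1)) / (k + 1)! * x ^ (k + 1)) =
      n * (coeff n (logInvSer ^ (k + 1)) / (k + 1)! * x ^ (k + 1)) +
        x * (coeff n (logInvSer ^ k) / k ! * x ^ k) := by
    intro k
    have := coeff_logInvSer_pow_succ_succ n k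
    rw [factorial_succ]
    field_simp
    push_cast
    linear_combination x ^ (k + 1) * (k ! : ℚ) * this
  have htop : coeff n (logInvSer ^ (n + 1)) / (n + 1)! * x ^ (n + 1) = 0 := by
    rw [coeff_logInvSer_pow_of_lt n.lt_succ_self, zero_div, zero_mul]
  have hbot : (n : ℚ) * (coeff n (logInvSer ^ 0) / (0 : ℕ)! * x ^ 0) = 0 := by
    cases n <;> simp [coeff_one]
  have hshift := sum_range_succ' (fun k => coeff n (logInvSer ^ k) / k ! * x ^ k) (n + 1)
  rw [sum_range_succ, htop, add_zero] at hshift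
  rw [risingCoeff, sum_range_succ', mul_add, mul_sum, sum_congr rfl fun k _ => hrec k,
    sum_add_distrib, ← mul_sum, ← mul_sum, ← risingCoeff]
  simp only [pow_zero, coeff_one, succ_ne_zero, if_false, zero_div, zero_mul, mul_zero, add_zero]
  rw [risingCoeff] at *
  linear_combination -(n : ℚ) * hshift - hbot

theorem factorial_mul_risingCoeff (n : ℕ) :
    n ! * risingCoeff x n = (ascPochhammer ℚ n).eval x := by
  induction n with
  | zero => simp [risingCoeff]
  | succ n ih =>
    rw [ascPochhammer_succ_eval, ← ih, factorial_succ, Nat.cast_mul, Nat.cast_succ,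
      show ((n + 1 : ℚ) * n !) * risingCoeff x (n + 1) =
        n ! * ((n + 1) * risingCoeff x (n + 1)) by ring,
      succ_mul_risingCoeff_succ]
    ring

lemma risingCoeff_natCast_succ (a N : ℕ) :
    risingCoeff (a : ℚ) (N + 1) = (a + N).choose (N + 1) := by
  have h := factorial_mul_risingCoeff (a : ℚ) (N + 1)
  rw [← ascPochhammer_eval_cast, ascPochhammer_nat_eq_ascFactorial,
    Nat.ascFactorial_eq_factorial_mul_choose', Nat.add_succ_sub_one, Nat.cast_mul] at h
  exact mul_left_cancel₀ (Nat.cast_ne_zero.2 (Nat.factorial_ne_zero _)) h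

end LogSeries

section CoeffDiv

open Polynomial

variable {R : Type*} [CommRing R]

/-- The series `f(s) g(t)` in the two variables `s = X 0` and `t = X 1`. -/
noncomputable def PowerSeries.extMul (f g : PowerSeries R) : MvPowerSeries (Fin 2) R :=
  fun e => PowerSeries.coeff (e 0) f * PowerSeries.coeff (e 1) g

lemma PowerSeries.isUnit_extMul {f g : PowerSeries R} (hf : IsUnit f) (hg : IsUnit g) :
    IsUnit (f.extMul g) := by
  rw [PowerSeries.isUnit_iff_constantCoeff] at hf hg
  rw [MvPowerSeries.isUnit_iff_constantCoeff, ← MvPowerSeries.coeff_zero_eq_constantCoeff_apply,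
    MvPowerSeries.coeff_apply]
  simpa [extMul] using hf.mul hg

lemma PowerSeries.coeff_X_pow_mul_X_pow_mul_extMul (a b j m : ℕ) (f g : PowerSeries R) :
    MvPowerSeries.coeff (Finsupp.single 0 j + Finsupp.single 1 m)
        (MvPowerSeries.X 0 ^ a * MvPowerSeries.X 1 ^ b * f.extMul g) =
      PowerSeries.coeff j (PowerSeries.X ^ a * f) *
        PowerSeries.coeff m (PowerSeries.X ^ b * g) := by
  rw [MvPowerSeries.X_pow_eq, MvPowerSeries.X_pow_eq, MvPowerSeries.monomial_mul_monomial, mul_one,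
    MvPowerSeries.coeff_monomial_mul, PowerSeries.coeff_X_pow_mul', PowerSeries.coeff_X_pow_mul']
  have hle : Finsupp.single (0 : Fin 2) a + Finsupp.single 1 b ≤
      Finsupp.single 0 j + Finsupp.single 1 m ↔ a ≤ j ∧ b ≤ m := by
    rw [Finsupp.le_def, Fin.forall_fin_two]
    simp
  simp_rw [hle]
  split_ifs <;> simp_all [extMul, MvPowerSeries.coeff_apply]

noncomputable def coeffDivOneSubPow (d j : ℕ) : R[X] →ₗ[R] R where
  toFun P :=
    PowerSeries.coeff j ((P : PowerSeries R) * (PowerSeries.invOneSubPow R d : PowerSeries R))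
  map_add' P Q := by simp [add_mul]
  map_smul' c P := by simp

noncomputable def coeffDivOneSubPowTwo (d j m : ℕ) : MvPolynomial (Fin 2) R →ₗ[R] R where
  toFun P := MvPowerSeries.coeff (Finsupp.single 0 j + Finsupp.single 1 m)
    ((P : MvPowerSeries (Fin 2) R) *
      PowerSeries.extMul (PowerSeries.invOneSubPow R d) (PowerSeries.invOneSubPow R d))
  map_add' P Q := by simp [add_mul]
  map_smul' c P := by simp

lemma coeffDivOneSubPowTwo_injective (d : ℕ) {P Q : MvPolynomial (Fin 2) R}
    (h : ∀ j m, coeffDivOneSubPowTwo d j m P = coeffDivOneSubPowTwo d j m Q) : P = Q := by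
  have hunit := PowerSeries.isUnit_extMul (PowerSeries.invOneSubPow R d).isUnit
    (PowerSeries.invOneSubPow R d).isUnit
  refine MvPolynomial.coe_injective _ _ (hunit.mul_left_inj.1 (MvPowerSeries.ext fun e => ?_))
  have he : e = Finsupp.single 0 (e 0) + Finsupp.single 1 (e 1) := by
    ext i; fin_cases i <;> simp
  rw [he]
  exact h (e 0) (e 1)

lemma coeffDivOneSubPowTwo_aeval_mul_aeval (d j m : ℕ) (P Q : R[X]) :
    coeffDivOneSubPowTwo d j m (aeval (MvPolynomial.X 0) P * aeval (MvPolynomial.X 1) Q) =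
      coeffDivOneSubPow d j P * coeffDivOneSubPow d m Q := by
  induction P using Polynomial.induction_on' with
  | add P P' hP hP' => rw [map_add, add_mul, map_add, hP, hP', map_add, add_mul]
  | monomial a c =>
    induction Q using Polynomial.induction_on' with
    | add Q Q' hQ hQ' => rw [map_add, mul_add, map_add, hQ, hQ', map_add, mul_add]
    | monomial b c' =>
      rw [← smul_X_eq_monomial, ← smul_X_eq_monomial, map_smul, map_smul, smul_mul_smul_comm,
        map_smul, map_smul, map_smul, smul_mul_smul_comm, aeval_X_pow, aeval_X_pow]
      congr 1
      simp only [coeffDivOneSubPowTwo, coeffDivOneSubPow, LinearMap.coe_mk, AddHom.coe_mk,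
        MvPolynomial.coe_mul, MvPolynomial.coe_pow, MvPolynomial.coe_X, Polynomial.coe_pow,
        Polynomial.coe_X]
      exact PowerSeries.coeff_X_pow_mul_X_pow_mul_extMul a b j m _ _

end CoeffDiv

section EulerianEvaluations

open Polynomial

variable {R : Type*} [CommRing R]

lemma desP_eq_card_descents {N : ℕ} (π : Equiv.Perm (Fin (N + 1))) :
    desP π = #(Tuple.descents π) :=
  Tuple.descentsCount_ofFn _

variable (R) in
noncomputable def eulerian (k : ℕ) : R[X] :=
  if k = 0 then 1 else ∑ π : Equiv.Perm (Fin k), X ^ (desP π + 1)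

lemma aeval_eulerian (v : Fin 2) (k : ℕ) :
    aeval (MvPolynomial.X v) (eulerian ℚ k) = eulerPoly v k := by
  unfold eulerian eulerPoly
  split_ifs <;> simp

lemma coeffDivOneSubPow_X_pow_succ {N k : ℕ} (hk : k ≤ N) (j : ℕ) :
    coeffDivOneSubPow (N + 2) j (X ^ (k + 1) : R[X]) = ((j + N - k).choose (N + 1) : R) := by
  simp only [coeffDivOneSubPow, LinearMap.coe_mk, AddHom.coe_mk, Polynomial.coe_pow,
    Polynomial.coe_X, PowerSeries.invOneSubPow_val_succ_eq_mk_add_choose,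
    PowerSeries.coeff_X_pow_mul', PowerSeries.coeff_mk]
  split_ifs with h
  · congr 2; omega
  · rw [Nat.choose_eq_zero_of_lt (by omega), Nat.cast_zero]

theorem coeffDivOneSubPow_eulerian (k j : ℕ) :
    coeffDivOneSubPow (k + 1) j (eulerian R k) = (j : R) ^ k := by
  cases k with
  | zero => simp [eulerian, coeffDivOneSubPow, PowerSeries.invOneSubPow_val_succ_eq_mk_add_choose]
  | succ K =>
    simp only [eulerian, if_neg K.succ_ne_zero, map_sum, desP_eq_card_descents,
      coeffDivOneSubPow_X_pow_succ (Tuple.card_descents_le _)]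
    exact_mod_cast congrArg (Nat.cast (R := R)) (Tuple.sum_choose_descents_eq_pow K j)

lemma coeffDivOneSubPow_one_sub_X_pow_mul {n k : ℕ} (hk : k ≤ n) (j : ℕ) (P : R[X]) :
    coeffDivOneSubPow (n + 1) j ((1 - X) ^ (n - k) * P) = coeffDivOneSubPow (k + 1) j P := by
  have h := PowerSeries.one_sub_pow_mul_invOneSubPow_val_add_eq_invOneSubPow_val R (k + 1) (n - k)
  rw [show k + 1 + (n - k) = n + 1 by omega] at h
  simp only [coeffDivOneSubPow, LinearMap.coe_mk, AddHom.coe_mk, Polynomial.coe_mul,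
    Polynomial.coe_pow, Polynomial.coe_sub, Polynomial.coe_one, Polynomial.coe_X]
  rw [mul_comm _ (P : PowerSeries R), mul_assoc, h]

theorem coeffDivOneSubPowTwo_eulerTwo (N j m : ℕ) :
    coeffDivOneSubPowTwo (N + 2) j m (eulerTwo (N + 1)) = ((j * m + N).choose (N + 1) : ℚ) := by
  have hsplit : ∀ π : Equiv.Perm (Fin (N + 1)),
      (MvPolynomial.X 0 ^ (desP π + 1) * MvPolynomial.X 1 ^ (desP π⁻¹ + 1) :
        MvPolynomial (Fin 2) ℚ) =
        aeval (MvPolynomial.X 0) (X ^ (desP π + 1) : ℚ[X]) *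
          aeval (MvPolynomial.X 1) (X ^ (desP π⁻¹ + 1) : ℚ[X]) := by
    simp
  rw [eulerTwo, if_neg N.succ_ne_zero, map_sum]
  simp only [hsplit, coeffDivOneSubPowTwo_aeval_mul_aeval]
  simp only [desP_eq_card_descents, coeffDivOneSubPow_X_pow_succ (Tuple.card_descents_le _)]
  exact_mod_cast Tuple.sum_choose_descents_mul_choose_descents_inv N j m

lemma coeffDivOneSubPowTwo_eulerPoly_mul_eulerPoly {n k : ℕ} (hk : k ≤ n) (j m : ℕ) :
    coeffDivOneSubPowTwo (n + 1) j m
        (((1 - MvPolynomial.X 0) * (1 - MvPolynomial.X 1)) ^ (n - k) *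
          eulerPoly 0 k * eulerPoly 1 k) =
      ((j * m : ℕ) : ℚ) ^ k := by
  have hsplit : ((1 - MvPolynomial.X 0) * (1 - MvPolynomial.X 1)) ^ (n - k) *
      eulerPoly 0 k * eulerPoly 1 k =
      aeval (MvPolynomial.X 0) ((1 - X) ^ (n - k) * eulerian ℚ k) *
        aeval (MvPolynomial.X 1) ((1 - X) ^ (n - k) * eulerian ℚ k) := by
    simp only [map_mul, map_pow, map_sub, map_one, aeval_X, aeval_eulerian, mul_pow]
    ring
  rw [hsplit, coeffDivOneSubPowTwo_aeval_mul_aeval, coeffDivOneSubPow_one_sub_X_pow_mul hk,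
    coeffDivOneSubPow_one_sub_X_pow_mul hk, coeffDivOneSubPow_eulerian, coeffDivOneSubPow_eulerian]
  push_cast
  ring

end EulerianEvaluations

/-- The right-hand side is stated coefficientwise, using
`[u^n] log(1/(1-qu))^k = q^n [u^n] log(1/(1-u))^k` for `q = (1-s)(1-t)`, which vanishes for
`k > n`. -/
theorem twoSided_eulerian_gf :
    (PowerSeries.mk (fun n => eulerTwo n) :
        PowerSeries (MvPolynomial (Fin 2) ℚ))
      = PowerSeries.mk (fun n =>
          ∑ k ∈ Finset.range (n + 1),
            MvPolynomial.C ((PowerSeries.coeff (R := ℚ) n) (logInvSer ^ k) / (Nat.factorial k : ℚ)) *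
              (((1 - MvPolynomial.X 0) * (1 - MvPolynomial.X 1)) ^ (n - k) *
                eulerPoly 0 k * eulerPoly 1 k)) := by
  refine PowerSeries.ext fun n => ?_
  rw [PowerSeries.coeff_mk, PowerSeries.coeff_mk]
  rcases n with _ | N
  · simp [eulerTwo, eulerPoly]
  refine coeffDivOneSubPowTwo_injective (R := ℚ) (N + 2) fun j m => ?_
  rw [coeffDivOneSubPowTwo_eulerTwo, map_sum, ← risingCoeff_natCast_succ, risingCoeff]
  refine sum_congr rfl fun k hk => ?_
  rw [MvPolynomial.C_mul', map_smul, smul_eq_mul,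
    coeffDivOneSubPowTwo_eulerPoly_mul_eulerPoly (Nat.lt_succ_iff.1 (mem_range.1 hk))]
end
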